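/- arXiv:1108.5830 — 8 statements merged into one kernel-verified Lean document; each statement's English description precedes it below -/
import Mathlib

section
/- Let d be a translation-invariant metric on ℝ, ρ(x) := d(0,x), and for r ≥ 0 set x_r := max{x : ρ(x) = r} (assuming the maximum exists). Then the Lebesgue measure of the ball B(p,r) is at most 2·x_r for every p ∈ ℝ. -/
open MeasureTheory

/-- Let `d` be a (proper, topology-compatible) translation-invariant metric on `ℝ`,
`ρ(x) := d(0,x)`, and `x_r := max{x : ρ(x) = r}` (assumed to exist). Then the Lebesgue
measure of the open ball `B(p,r)` is at most `2·x_r`, for every `p ∈ ℝ`. -/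
theorem measure_ball_le (d : ℝ → ℝ → ℝ)
    (hzero : ∀ x y : ℝ, d x y = 0 ↔ x = y)
    (hsymm : ∀ x y : ℝ, d x y = d y x)
    (htri : ∀ x y z : ℝ, d x z ≤ d x y + d y z)
    (hinv : ∀ x y v : ℝ, d (x + v) (y + v) = d x y)
    (hcont : Continuous (fun x => d 0 x))
    (hproper : Filter.Tendsto (fun x => d 0 x) Filter.atTop Filter.atTop) :
    ∀ (p r xr : ℝ), 0 ≤ r →
      (d 0 xr = r ∧ ∀ x : ℝ, d 0 x = r → x ≤ xr) →
      volume {y : ℝ | d p y < r} ≤ ENNReal.ofReal (2 * xr) := by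
  intro p r xr hr ⟨hxr, hmax⟩
  -- key: if ρ x < r then x ≤ xr
  have key : ∀ x : ℝ, d 0 x < r → x ≤ xr := by
    intro x hx
    by_contra h
    push_neg at h
    -- find M ≥ x with d 0 M ≥ r
    obtain ⟨X, hX⟩ := (Filter.tendsto_atTop_atTop.mp hproper) r
    set M := max x X with hM
    have hMr : r ≤ d 0 M := hX M (le_max_right _ _)
    have : ∃ c ∈ Set.Icc x M, d 0 c = r := by
      exact intermediate_value_Icc (le_max_left _ _) hcont.continuousOn ⟨hx.le, hMr⟩
    obtain ⟨c, hc, hcr⟩ := this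
    have := hmax c hcr
    linarith [hc.1]
  -- evenness: d 0 (-x) = d 0 x
  have heven : ∀ x : ℝ, d 0 (-x) = d 0 x := by
    intro x
    have := hinv x 0 (-x)
    simp at this
    rw [this, hsymm]
  have hsub : {y : ℝ | d p y < r} ⊆ Set.Icc (p - xr) (p + xr) := by
    intro y hy
    have h1 : d 0 (y - p) < r := by
      have := hinv 0 (y - p) p
      simp at this
      rw [← this]; exact hy
    have h2 : d 0 (-(y - p)) < r := by rw [heven]; exact h1
    have k1 := key _ h1
    have k2 := key _ h2
    constructor <;> simp at * <;> linarith
  calc volume {y : ℝ | d p y < r} ≤ volume (Set.Icc (p - xr) (p + xr)) :=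
        measure_mono hsub
    _ = ENNReal.ofReal (2 * xr) := by rw [Real.volume_Icc]; ring_nf
end

section
/- Let ρ : [0,∞) → [0,∞) induce a translation-invariant distance d_ρ(s,t) := ρ(|s−t|) on ℝ giving the standard topology, and suppose (ℝ, d_ρ) is L-biLipschitz homeomorphic to the Euclidean line. Then there exists a constant K ≥ 1 such that (1/K)·x ≤ ρ(x) ≤ K·x for all x > 0. -/
set_option maxHeartbeats 1000000

private theorem rho_helper (ρ : ℝ → ℝ)
    (hnonneg : ∀ x : ℝ, 0 ≤ ρ x)
    (hzero : ∀ x y : ℝ, ρ |x - y| = 0 ↔ x = y)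
    (htri : ∀ x y z : ℝ, ρ |x - z| ≤ ρ |x - y| + ρ |y - z|)
    (L : ℝ) (hL : 1 ≤ L) (g : ℝ → ℝ) (hg : StrictMono g)
    (hbl : ∀ s t : ℝ, (1 / L) * ρ |s - t| ≤ |g s - g t| ∧ |g s - g t| ≤ L * ρ |s - t|) :
    ∃ K : ℝ, 1 ≤ K ∧ ∀ x : ℝ, 0 < x → (1 / K) * x ≤ ρ x ∧ ρ x ≤ K * x := by
  have hL0 : (0:ℝ) < L := lt_of_lt_of_le one_pos hL
  have hL2 : (1:ℝ) ≤ L^2 := by nlinarith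
  have hL4 : (1:ℝ) ≤ L^4 := by nlinarith
  have hL24 : L^2 ≤ L^4 := by nlinarith [sq_nonneg L]
  -- positivity of ρ on positives
  have hpos : ∀ x : ℝ, 0 < x → 0 < ρ x := by
    intro x hx
    rcases lt_or_eq_of_le (hnonneg x) with h | h
    · exact h
    · exfalso
      have hx0 : ρ |x - 0| = 0 := by rw [sub_zero, abs_of_pos hx]; exact h.symm
      exact absurd ((hzero x 0).1 hx0) (ne_of_gt hx)
  -- subadditivity
  have subadd : ∀ a b : ℝ, 0 ≤ a → 0 ≤ b → ρ (a + b) ≤ ρ a + ρ b := by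
    intro a b ha hb
    have := htri (a + b) b 0
    have e1 : |a + b - 0| = a + b := by rw [sub_zero, abs_of_nonneg (by linarith)]
    have e2 : |a + b - b| = a := by rw [add_sub_cancel_right, abs_of_nonneg ha]
    have e3 : |b - 0| = b := by rw [sub_zero, abs_of_nonneg hb]
    rwa [e1, e2, e3] at this
  -- ρ(n x) ≤ n ρ(x)
  have mulle : ∀ (n : ℕ) (x : ℝ), 0 ≤ x → ρ ((n:ℝ) * x) ≤ (n:ℝ) * ρ x := by
    intro n
    induction n with
    | zero =>
      intro x hx
      simp only [Nat.cast_zero, zero_mul]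
      have : ρ |(0:ℝ) - 0| = 0 := (hzero 0 0).2 rfl
      simpa using this.le
    | succ n ih =>
      intro x hx
      have h1 : ((n:ℝ) + 1) * x = (n:ℝ) * x + x := by ring
      have := subadd ((n:ℝ) * x) x (by positivity) hx
      push_cast
      rw [h1]
      calc ρ ((n:ℝ) * x + x) ≤ ρ ((n:ℝ) * x) + ρ x := this
        _ ≤ (n:ℝ) * ρ x + ρ x := by linarith [ih x hx]
        _ = ((n:ℝ) + 1) * ρ x := by ring
  -- telescoping bounds
  have tele : ∀ (x : ℝ), 0 < x → ∀ n : ℕ,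
      (n:ℝ) * ((1/L) * ρ x) ≤ g ((n:ℝ) * x) - g 0 ∧
      g ((n:ℝ) * x) - g 0 ≤ (n:ℝ) * (L * ρ x) := by
    intro x hx n
    induction n with
    | zero => simp
    | succ n ih =>
      have hlt : (n:ℝ) * x < ((n:ℝ) + 1) * x := by nlinarith
      have habs : |g (((n:ℝ)+1) * x) - g ((n:ℝ) * x)| = g (((n:ℝ)+1) * x) - g ((n:ℝ) * x) :=
        abs_of_pos (sub_pos.2 (hg hlt))
      have hd : |((n:ℝ)+1) * x - (n:ℝ) * x| = x := by
        rw [show ((n:ℝ)+1) * x - (n:ℝ) * x = x by ring, abs_of_pos hx]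
      have hb := hbl (((n:ℝ)+1) * x) ((n:ℝ) * x)
      rw [hd, habs] at hb
      push_cast
      constructor
      · have := ih.1; nlinarith [hb.1]
      · have := ih.2; nlinarith [hb.2]
  -- comparison against ρ(y) for y > 0
  have cmp0 : ∀ y : ℝ, 0 < y → (1/L) * ρ y ≤ g y - g 0 ∧ g y - g 0 ≤ L * ρ y := by
    intro y hy
    have habs : |g y - g 0| = g y - g 0 := abs_of_pos (sub_pos.2 (hg hy))
    have hb := hbl y 0
    rw [sub_zero, abs_of_pos hy, habs] at hb
    exact hb
  -- monotone comparison: 0 < a ≤ b ⇒ ρ a ≤ L^2 ρ b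
  have cmp : ∀ a b : ℝ, 0 < a → a ≤ b → ρ a ≤ L * (L * ρ b) := by
    intro a b ha hab
    have hb0 : 0 < b := lt_of_lt_of_le ha hab
    have h1 := (cmp0 a ha).1
    have h2 := (cmp0 b hb0).2
    have hm : g a - g 0 ≤ g b - g 0 := by
      have := hg.le_iff_le.2 hab; linarith
    have h3 : (1/L) * ρ a ≤ L * ρ b := by linarith
    have := mul_le_mul_of_nonneg_left h3 hL0.le
    have e : L * ((1/L) * ρ a) = ρ a := by field_simp
    rw [e] at this
    exact this
  set c := ρ 1 with hc
  have hc0 : 0 < c := hpos 1 one_pos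
  have h2c : 2 ≤ c + 1/c := by
    rw [← sub_nonneg]
    have e : c + 1/c - 2 = (c-1)^2 / c := by field_simp; ring
    rw [e]; positivity
  obtain ⟨K, hK⟩ : ∃ K : ℝ, K = 2 * L^4 * (c + 1/c) := ⟨_, rfl⟩
  have hK0 : 0 < K := by
    rw [hK]; have : (0:ℝ) < c + 1/c := by positivity
    positivity
  refine ⟨K, by rw [hK]; nlinarith, ?_⟩
  intro x hx
  have main : x * c / (2 * L^4) ≤ ρ x ∧ ρ x ≤ 2 * L^4 * c * x := by
    rcases le_or_gt 1 x with hx1 | hx1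
    · -- x ≥ 1, n = ⌊x⌋
      set n : ℕ := ⌊x⌋₊ with hn
      have hn1 : 1 ≤ n := Nat.le_floor (by exact_mod_cast hx1)
      have hnx : (n:ℝ) ≤ x := Nat.floor_le (le_of_lt hx)
      have hxn : x < (n:ℝ) + 1 := Nat.lt_floor_add_one x
      have hn1' : (1:ℝ) ≤ (n:ℝ) := by exact_mod_cast hn1
      have hnpos : (0:ℝ) < n := by linarith
      have t1 := (tele 1 one_pos n).1
      have t2 := (cmp0 ((n:ℝ) * 1) (by rw [mul_one]; exact hnpos)).2
      rw [mul_one] at t1 t2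
      have h1 : (n:ℝ) * ((1/L) * c) ≤ L * ρ (n:ℝ) := le_trans t1 t2
      have hρn : (n:ℝ) * c ≤ L * (L * ρ (n:ℝ)) := by
        have := mul_le_mul_of_nonneg_left h1 hL0.le
        have e : L * ((n:ℝ) * ((1/L) * c)) = (n:ℝ) * c := by field_simp
        rw [e] at this
        exact this
      have hρx : ρ (n:ℝ) ≤ L * (L * ρ x) := cmp (n:ℝ) x hnpos hnx
      have lower : x * c / (2 * L^4) ≤ ρ x := by
        rw [div_le_iff₀ (by positivity)]
        have s1 : x * c ≤ (2*(n:ℝ)) * c := mul_le_mul_of_nonneg_right (by linarith) hc0.le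
        have s3 : L * (L * ρ (n:ℝ)) ≤ L * (L * (L * (L * ρ x))) :=
          mul_le_mul_of_nonneg_left (mul_le_mul_of_nonneg_left hρx hL0.le) hL0.le
        have e : 2 * (L * (L * (L * (L * ρ x)))) = ρ x * (2 * L^4) := by ring
        linarith
      have hρx2 : ρ x ≤ L * (L * ρ ((n:ℝ) + 1)) := cmp x ((n:ℝ)+1) hx (le_of_lt hxn)
      have hρn1 : ρ ((n:ℝ) + 1) ≤ ((n:ℝ) + 1) * c := by
        have := mulle (n+1) 1 zero_le_one
        push_cast at this
        simpa using this
      have upper : ρ x ≤ 2 * L^4 * c * x := by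
        have e1 : L * (L * ρ ((n:ℝ)+1)) ≤ L * (L * (((n:ℝ)+1) * c)) :=
          mul_le_mul_of_nonneg_left (mul_le_mul_of_nonneg_left hρn1 hL0.le) hL0.le
        have e2 : L * (L * (((n:ℝ)+1) * c)) ≤ L * (L * ((2*x) * c)) := by
          have h : ((n:ℝ)+1) * c ≤ (2*x) * c :=
            mul_le_mul_of_nonneg_right (by linarith) hc0.le
          exact mul_le_mul_of_nonneg_left (mul_le_mul_of_nonneg_left h hL0.le) hL0.le
        have e3 : L * (L * ((2*x) * c)) ≤ 2 * L^4 * c * x := by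
          have hxc : (0:ℝ) ≤ x * c := by positivity
          have h := mul_le_mul_of_nonneg_right hL24 hxc
          nlinarith
        linarith
      exact ⟨lower, upper⟩
    · -- 0 < x < 1, n = ⌈1/x⌉
      set n : ℕ := ⌈1/x⌉₊ with hn
      have hxx : x * (1/x) = 1 := by field_simp
      have hix : (1:ℝ) < 1/x := (one_lt_div hx).2 hx1
      have hn1 : 1/x ≤ (n:ℝ) := Nat.le_ceil _
      have hn2 : (n:ℝ) < 1/x + 1 := Nat.ceil_lt_add_one (by positivity)
      have hnpos : (0:ℝ) < n := by linarith
      have hnx1 : (1:ℝ) ≤ (n:ℝ) * x := (div_le_iff₀ hx).1 hn1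
      have hnx2 : (n:ℝ) * x ≤ 2 := by nlinarith
      have hnxpos : 0 < (n:ℝ) * x := by linarith
      have t1 := (tele x hx n).1
      have t2 := (tele x hx n).2
      have c1 := (cmp0 ((n:ℝ) * x) hnxpos).1
      have c2 := (cmp0 ((n:ℝ) * x) hnxpos).2
      have hρnx : ρ ((n:ℝ) * x) ≤ L * (L * ρ 2) := cmp ((n:ℝ)*x) 2 hnxpos hnx2
      have hρ2 : ρ 2 ≤ 2 * c := by
        have := mulle 2 1 zero_le_one
        push_cast at this
        simpa using this
      have upper : ρ x ≤ 2 * L^4 * c * x := by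
        have key : (n:ℝ) * ((1/L) * ρ x) ≤ L * (L * (L * (2*c))) := by
          have s1 : (n:ℝ) * ((1/L) * ρ x) ≤ L * ρ ((n:ℝ)*x) := le_trans t1 c2
          have s2 : L * ρ ((n:ℝ)*x) ≤ L * (L * (L * ρ 2)) :=
            mul_le_mul_of_nonneg_left hρnx hL0.le
          have s3 : L * (L * (L * ρ 2)) ≤ L * (L * (L * (2*c))) := by
            have h := mul_le_mul_of_nonneg_left hρ2 hL0.le
            exact mul_le_mul_of_nonneg_left (mul_le_mul_of_nonneg_left h hL0.le) hL0.le
          linarith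
        have key2 : (n:ℝ) * ρ x ≤ 2 * L^4 * c := by
          have h := mul_le_mul_of_nonneg_left key hL0.le
          have e : L * ((n:ℝ) * ((1/L) * ρ x)) = (n:ℝ) * ρ x := by field_simp
          have e2 : L * (L * (L * (L * (2*c)))) = 2 * L^4 * c := by ring
          rw [e, e2] at h
          exact h
        have h6 : (1/x) * ρ x ≤ 2 * L^4 * c :=
          le_trans (mul_le_mul_of_nonneg_right hn1 (hnonneg x)) key2
        have h7 := mul_le_mul_of_nonneg_right h6 hx.le
        have e : (1/x) * ρ x * x = ρ x := by field_simp
        rw [e] at h7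
        linarith
      have hρ1 : c ≤ L * (L * ρ ((n:ℝ) * x)) := cmp 1 ((n:ℝ)*x) one_pos hnx1
      have lower : x * c / (2 * L^4) ≤ ρ x := by
        rw [div_le_iff₀ (by positivity)]
        have h1 : (1/L) * ρ ((n:ℝ)*x) ≤ (n:ℝ) * (L * ρ x) := le_trans c1 t2
        have h2 : ρ ((n:ℝ)*x) ≤ (n:ℝ) * (L * (L * ρ x)) := by
          have h := mul_le_mul_of_nonneg_left h1 hL0.le
          have e : L * ((1/L) * ρ ((n:ℝ)*x)) = ρ ((n:ℝ)*x) := by field_simp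
          rw [e] at h
          calc ρ ((n:ℝ)*x) ≤ L * ((n:ℝ) * (L * ρ x)) := h
            _ = (n:ℝ) * (L * (L * ρ x)) := by ring
        have h3 : c ≤ (n:ℝ) * (L^4 * ρ x) := by
          calc c ≤ L * (L * ρ ((n:ℝ)*x)) := hρ1
            _ ≤ L * (L * ((n:ℝ) * (L * (L * ρ x)))) :=
              mul_le_mul_of_nonneg_left (mul_le_mul_of_nonneg_left h2 hL0.le) hL0.le
            _ = (n:ℝ) * (L^4 * ρ x) := by ring
        have hst : (0:ℝ) ≤ L^4 * ρ x := by
          have := hnonneg x; positivity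
        have h4 : c * x ≤ 2 * (L^4 * ρ x) := by
          calc c * x ≤ ((n:ℝ) * (L^4 * ρ x)) * x := mul_le_mul_of_nonneg_right h3 hx.le
            _ = ((n:ℝ) * x) * (L^4 * ρ x) := by ring
            _ ≤ 2 * (L^4 * ρ x) := mul_le_mul_of_nonneg_right hnx2 hst
        linarith
      exact ⟨lower, upper⟩
  constructor
  · have hKc : K * c = 2 * L^4 * (c^2 + 1) := by rw [hK]; field_simp [hc0.ne']
    have h7 : 2 * L^4 ≤ K * c := by rw [hKc]; nlinarith [sq_nonneg c]
    have h8 : 1/K ≤ c / (2 * L^4) := by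
      rw [div_le_div_iff₀ hK0 (by positivity)]
      linarith
    calc (1/K) * x ≤ (c / (2 * L^4)) * x := mul_le_mul_of_nonneg_right h8 hx.le
      _ = x * c / (2 * L^4) := by ring
      _ ≤ ρ x := main.1
  · have h9 : 2 * L^4 * c ≤ K := by
      have h1c : c ≤ c + 1/c := by
        have : (0:ℝ) < 1/c := by positivity
        linarith
      rw [hK, show 2 * L^4 * c = (2*L^4) * c by ring]
      exact mul_le_mul_of_nonneg_left h1c (by positivity)
    calc ρ x ≤ 2 * L^4 * c * x := main.2
      _ ≤ K * x := mul_le_mul_of_nonneg_right h9 hx.le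

/-- If `d_ρ(s,t) := ρ(|s−t|)` is a translation-invariant distance on `ℝ` and `(ℝ, d_ρ)` is
`L`-biLipschitz homeomorphic to the Euclidean line, then `ρ` is linearly bounded above and
below: there is `K ≥ 1` with `x/K ≤ ρ(x) ≤ K·x` for all `x > 0`. -/
theorem rho_linear_of_biLipschitz (ρ : ℝ → ℝ)
    (hnonneg : ∀ x : ℝ, 0 ≤ ρ x)
    (hzero : ∀ x y : ℝ, ρ |x - y| = 0 ↔ x = y)
    (htri : ∀ x y z : ℝ, ρ |x - z| ≤ ρ |x - y| + ρ |y - z|)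
    -- `d_ρ` induces the standard topology:
    (htop : ∀ s : Set ℝ, IsOpen s ↔ ∀ x ∈ s, ∃ ε : ℝ, 0 < ε ∧ ∀ y : ℝ, ρ |x - y| < ε → y ∈ s)
    (L : ℝ) (hL : 1 ≤ L) (f : ℝ → ℝ)
    (hbij : Function.Bijective f) (hfc : Continuous f)
    (hbl : ∀ s t : ℝ, (1 / L) * ρ |s - t| ≤ |f s - f t| ∧ |f s - f t| ≤ L * ρ |s - t|) :
    ∃ K : ℝ, 1 ≤ K ∧ ∀ x : ℝ, 0 < x → (1 / K) * x ≤ ρ x ∧ ρ x ≤ K * x := by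
  rcases hfc.strictMono_of_inj hbij.injective with hm | hm
  · exact rho_helper ρ hnonneg hzero htri L hL f hm hbl
  · refine rho_helper ρ hnonneg hzero htri L hL (fun t => -(f t)) (fun a b hab => by
      simpa using hm hab) ?_
    intro s t
    have e : |-(f s) - -(f t)| = |f s - f t| := by
      rw [show -(f s) - -(f t) = -(f s - f t) by ring, abs_neg]
    simp only [e]
    exact hbl s t
end

section
/- Let C = (ℝ/ℤ) × ℝ be the cylinder and γ a closed curve in C that is not null-homotopic. For l ∈ ℝ/ℤ let γ_l be the curve t ↦ γ(t) + (l,0). Then the images of γ and γ_l intersect: Im(γ) ∩ Im(γ_l) ≠ ∅. -/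
/-!
Lift `γ` to the universal cover `ℝ × ℝ` of the cylinder: its circle coordinate lifts to
`A : ℝ → ℝ` with `A (s + 1) = A s + d` for an integer `d`. If `d = 0`, then `γ` factors through
the contractible plane, so it is null-homotopic. Otherwise the lifted curve `s ↦ (A s, b s)` runs
from `x = -∞` to `x = +∞` inside the horizontal strip between the extreme values of `b`, whereas
the arc of its translate by `(c, 0)` (with `c` a lift of `l`) from a highest to a lowest point
crosses this strip from top to bottom; so the two meet. This crossing property is the
two-dimensional Poincaré–Miranda theorem: on the square, a continuous angle for `α u - β v` would
have to turn once around along the boundary.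
-/

open Set Real

theorem exists_int_mem_Icc_of_cos_nonneg_of_sin_nonpos {x : ℝ} (hc : 0 ≤ cos x)
    (hs : sin x ≤ 0) : ∃ k : ℤ, x ∈ Icc (2 * π * k - π / 2) (2 * π * k) := by
  set k := toIocDiv two_pi_pos (-π) x
  set y := toIocMod two_pi_pos (-π) x
  have hxy : x = y + k * (2 * π) := by
    rw [← zsmul_eq_mul, ← self_sub_toIocMod two_pi_pos (-π) x]; ring
  obtain ⟨hy₁, hy₂⟩ : y ∈ Ioc (-π) (-π + 2 * π) := toIocMod_mem_Ioc _ _ _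
  rw [hxy, cos_add_int_mul_two_pi] at hc
  rw [hxy, sin_add_int_mul_two_pi] at hs
  have hy_nonpos : y ≤ 0 := by
    by_contra! hy
    rcases (show y ≤ π by linarith).lt_or_eq with hyπ | hyπ
    · linarith [sin_pos_of_pos_of_lt_pi hy hyπ]
    · rw [hyπ, cos_pi] at hc
      linarith
  have hy_ge : -(π / 2) ≤ y := by
    by_contra! hy
    have := cos_neg_of_pi_div_two_lt_of_lt (x := -y) (by linarith) (by linarith)
    rw [cos_neg] at this
    linarith
  exact ⟨k, by rw [hxy]; constructor <;> linarith⟩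

theorem IsPreconnected.le_of_cos_sub_nonneg {S : Set ℝ} (hS : IsPreconnected S) {φ a b : ℝ}
    (hcos : ∀ x ∈ S, 0 ≤ cos (x - φ)) (ha : a ∈ S) (hb : b ∈ S)
    (hsa : sin (a - φ) ≤ 0) (hsb : 0 ≤ sin (b - φ)) : a ≤ b := by
  by_contra! hba
  obtain ⟨k, hk₁, hk₂⟩ := exists_int_mem_Icc_of_cos_nonneg_of_sin_nonpos (hcos a ha) hsa
  obtain ⟨j, hj₁, hj₂⟩ := exists_int_mem_Icc_of_cos_nonneg_of_sin_nonpos (x := -(b - φ))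
    (by rw [cos_neg]; exact hcos b hb) (by rw [sin_neg]; linarith)
  have hjk : (1 : ℝ) ≤ k + j := by
    have : (0 : ℝ) < (k + j) * (2 * π) := by linarith
    exact_mod_cast (pos_of_mul_pos_left this two_pi_pos.le : (0 : ℝ) < k + j)
  -- the point `φ + 2πk - π`, where `cos (· - φ) = -1`, lies between `b` and `a`
  have hmem : φ + (-π + k * (2 * π)) ∈ S := by
    refine hS.Icc_subset hb ha ⟨?_, ?_⟩ <;>
      nlinarith [mul_le_mul_of_nonneg_left hjk pi_pos.le, pi_pos]
  have := hcos _ hmem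
  rw [add_sub_cancel_left, cos_add_int_mul_two_pi, cos_neg, cos_pi] at this
  linarith

theorem not_continuous_of_turns_around_unitSquare {Θ : ℝ × ℝ → ℝ}
    (hbot : ∀ u ∈ Icc (0 : ℝ) 1, sin (Θ (u, 0)) ≤ 0)
    (hright : ∀ v ∈ Icc (0 : ℝ) 1, 0 ≤ cos (Θ (1, v)))
    (htop : ∀ u ∈ Icc (0 : ℝ) 1, 0 ≤ sin (Θ (u, 1)))
    (hleft : ∀ v ∈ Icc (0 : ℝ) 1, cos (Θ (0, v)) ≤ 0) :
    ¬ Continuous Θ := by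
  intro hΘ
  have h0 : (0 : ℝ) ∈ Icc (0 : ℝ) 1 := left_mem_Icc.2 zero_le_one
  have h1 : (1 : ℝ) ∈ Icc (0 : ℝ) 1 := right_mem_Icc.2 zero_le_one
  -- along each edge `Θ` stays in a half-plane, so it can only increase from corner to corner
  have edge : ∀ (e : ℝ → ℝ × ℝ) (φ : ℝ) {u₀ u₁ : ℝ}, Continuous e → u₀ ∈ Icc (0 : ℝ) 1 →
      u₁ ∈ Icc (0 : ℝ) 1 → (∀ u ∈ Icc (0 : ℝ) 1, 0 ≤ cos (Θ (e u) - φ)) →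
      sin (Θ (e u₀) - φ) ≤ 0 → 0 ≤ sin (Θ (e u₁) - φ) → Θ (e u₀) ≤ Θ (e u₁) :=
    fun e φ _ _ he hu₀ hu₁ hcos ↦
      (isPreconnected_Icc.image _ (hΘ.comp he).continuousOn).le_of_cos_sub_nonneg
        (forall_mem_image.2 hcos) (mem_image_of_mem _ hu₀) (mem_image_of_mem _ hu₁)
  have hB : Θ (0, 0) ≤ Θ (1, 0) := edge (fun u ↦ (u, 0)) (-(π / 2)) (by fun_prop) h0 h1
    (fun u hu ↦ by simpa [cos_add_pi_div_two] using hbot u hu)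
    (by simpa [sin_add_pi_div_two] using hleft 0 h0)
    (by simpa [sin_add_pi_div_two] using hright 0 h0)
  have hR : Θ (1, 0) ≤ Θ (1, 1) := edge (fun v ↦ (1, v)) 0 (by fun_prop) h0 h1
    (fun v hv ↦ by simpa using hright v hv) (by simpa using hbot 1 h1) (by simpa using htop 1 h1)
  have hT : Θ (1, 1) ≤ Θ (0, 1) := edge (fun u ↦ (u, 1)) (π / 2) (by fun_prop) h1 h0
    (fun u hu ↦ by simpa [cos_sub_pi_div_two] using htop u hu)
    (by simpa [sin_sub_pi_div_two] using hright 1 h1)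
    (by simpa [sin_sub_pi_div_two] using hleft 1 h1)
  have hL : Θ (0, 1) ≤ Θ (0, 0) := edge (fun v ↦ (0, v)) π (by fun_prop) h1 h0
    (fun v hv ↦ by simpa [cos_sub_pi] using hleft v hv)
    (by simpa [sin_sub_pi] using htop 0 h0)
    (by simpa [sin_sub_pi] using hbot 0 h0)
  have e₁ : Θ (1, 0) = Θ (0, 0) := by linarith
  have e₂ : Θ (1, 1) = Θ (0, 0) := by linarith
  have hcos₁ := hright 0 h0
  have hsin₂ := htop 1 h1
  rw [e₁] at hcos₁
  rw [e₂] at hsin₂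
  nlinarith [sin_sq_add_cos_sq (Θ (0, 0)), hbot 0 h0, hleft 0 h0]

theorem exists_continuous_polar_angle {X : Type*} [TopologicalSpace X] [SimplyConnectedSpace X]
    [LocallyPathConnectedSpace X] {f g : X → ℝ} (hf : Continuous f) (hg : Continuous g)
    (hfg : ∀ x, f x ≠ 0 ∨ g x ≠ 0) :
    ∃ Θ : X → ℝ, Continuous Θ ∧ ∀ x, ∃ r > 0, f x = r * cos (Θ x) ∧ g x = r * sin (Θ x) := by
  let F : C(X, {w : ℂ // w ≠ 0}) :=
    ⟨fun x ↦ ⟨f x + g x * Complex.I, fun h ↦ (hfg x).elim (· (by simpa using congrArg Complex.re h))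
      (· (by simpa using congrArg Complex.im h))⟩, by fun_prop⟩
  obtain ⟨x₀⟩ := (inferInstance : Nonempty X)
  obtain ⟨L, ⟨-, hL⟩, -⟩ := Complex.isCoveringMap_exp.existsUnique_continuousMap_lifts F x₀
    (Complex.log (F x₀)) (Subtype.ext (Complex.exp_log (F x₀).2))
  refine ⟨fun x ↦ (L x).im, by fun_prop, fun x ↦ ⟨Real.exp (L x).re, Real.exp_pos _, ?_⟩⟩
  have hx : Complex.exp (L x) = f x + g x * Complex.I := congrArg Subtype.val (congrFun hL x)
  exact ⟨by simpa [Complex.exp_re] using congrArg Complex.re hx.symm,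
    by simpa [Complex.exp_im] using congrArg Complex.im hx.symm⟩

theorem exists_zero_of_unitSquare_boundary_signs {f g : ℝ × ℝ → ℝ}
    (hf : ContinuousOn f (Icc 0 1 ×ˢ Icc 0 1)) (hg : ContinuousOn g (Icc 0 1 ×ˢ Icc 0 1))
    (hleft : ∀ v ∈ Icc (0 : ℝ) 1, f (0, v) ≤ 0) (hright : ∀ v ∈ Icc (0 : ℝ) 1, 0 ≤ f (1, v))
    (hbot : ∀ u ∈ Icc (0 : ℝ) 1, g (u, 0) ≤ 0) (htop : ∀ u ∈ Icc (0 : ℝ) 1, 0 ≤ g (u, 1)) :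
    ∃ z ∈ Icc (0 : ℝ) 1 ×ˢ Icc (0 : ℝ) 1, f z = 0 ∧ g z = 0 := by
  by_contra! hfg
  -- retract the plane onto the square, so that the angle can be lifted over all of `ℝ × ℝ`
  let κ : ℝ × ℝ → ℝ × ℝ := fun z ↦
    ((projIcc 0 1 zero_le_one z.1 : ℝ), (projIcc 0 1 zero_le_one z.2 : ℝ))
  have hκ : Continuous κ := by fun_prop
  have hκ_mem : ∀ z, κ z ∈ Icc (0 : ℝ) 1 ×ˢ Icc (0 : ℝ) 1 :=
    fun z ↦ ⟨(projIcc 0 1 zero_le_one z.1).2, (projIcc 0 1 zero_le_one z.2).2⟩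
  have hκ_id : ∀ z ∈ Icc (0 : ℝ) 1 ×ˢ Icc (0 : ℝ) 1, κ z = z :=
    fun z hz ↦ by simp [κ, projIcc_of_mem _ hz.1, projIcc_of_mem _ hz.2]
  obtain ⟨Θ, hΘ, hpolar⟩ := exists_continuous_polar_angle (hf.comp_continuous hκ hκ_mem)
    (hg.comp_continuous hκ hκ_mem)
    fun z ↦ or_iff_not_imp_left.2 fun h ↦ hfg _ (hκ_mem z) (not_not.1 h)
  have hpolar' : ∀ z ∈ Icc (0 : ℝ) 1 ×ˢ Icc (0 : ℝ) 1,
      ∃ r > 0, f z = r * cos (Θ z) ∧ g z = r * sin (Θ z) := fun z hz ↦ by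
    simpa only [Function.comp_apply, hκ_id z hz] using hpolar z
  have h0 : (0 : ℝ) ∈ Icc (0 : ℝ) 1 := left_mem_Icc.2 zero_le_one
  have h1 : (1 : ℝ) ∈ Icc (0 : ℝ) 1 := right_mem_Icc.2 zero_le_one
  refine not_continuous_of_turns_around_unitSquare (fun u hu ↦ ?_) (fun v hv ↦ ?_)
    (fun u hu ↦ ?_) (fun v hv ↦ ?_) hΘ
  · obtain ⟨r, hr, -, hg'⟩ := hpolar' (u, 0) ⟨hu, h0⟩
    exact nonpos_of_mul_nonpos_right (hg' ▸ hbot u hu) hr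
  · obtain ⟨r, hr, hf', -⟩ := hpolar' (1, v) ⟨h1, hv⟩
    exact (mul_nonneg_iff_of_pos_left hr).1 (hf' ▸ hright v hv)
  · obtain ⟨r, hr, -, hg'⟩ := hpolar' (u, 1) ⟨hu, h1⟩
    exact (mul_nonneg_iff_of_pos_left hr).1 (hg' ▸ htop u hu)
  · obtain ⟨r, hr, hf', -⟩ := hpolar' (0, v) ⟨h0, hv⟩
    exact nonpos_of_mul_nonpos_right (hf' ▸ hleft v hv) hr

theorem exists_eq_of_crossing {α β : ℝ → ℝ × ℝ}
    (hα : ContinuousOn α (Icc 0 1)) (hβ : ContinuousOn β (Icc 0 1))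
    (hβ_fst : ∀ v ∈ Icc (0 : ℝ) 1, (α 0).1 ≤ (β v).1 ∧ (β v).1 ≤ (α 1).1)
    (hα_snd : ∀ u ∈ Icc (0 : ℝ) 1, (β 1).2 ≤ (α u).2 ∧ (α u).2 ≤ (β 0).2) :
    ∃ u ∈ Icc (0 : ℝ) 1, ∃ v ∈ Icc (0 : ℝ) 1, α u = β v := by
  have hα' : ContinuousOn (fun z : ℝ × ℝ ↦ α z.1) (Icc 0 1 ×ˢ Icc 0 1) :=
    hα.comp continuousOn_fst fun _ hz ↦ hz.1
  have hβ' : ContinuousOn (fun z : ℝ × ℝ ↦ β z.2) (Icc 0 1 ×ˢ Icc 0 1) :=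
    hβ.comp continuousOn_snd fun _ hz ↦ hz.2
  obtain ⟨⟨u, v⟩, ⟨hu, hv⟩, h₁, h₂⟩ := exists_zero_of_unitSquare_boundary_signs
    (f := fun z ↦ (α z.1).1 - (β z.2).1) (g := fun z ↦ (α z.1).2 - (β z.2).2)
    (hα'.fst.sub hβ'.fst) (hα'.snd.sub hβ'.snd)
    (fun v hv ↦ sub_nonpos.2 (hβ_fst v hv).1) (fun v hv ↦ sub_nonneg.2 (hβ_fst v hv).2)
    (fun u hu ↦ sub_nonpos.2 (hα_snd u hu).2) (fun u hu ↦ sub_nonneg.2 (hα_snd u hu).1)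
  exact ⟨u, hu, v, hv, Prod.ext (sub_eq_zero.1 h₁) (sub_eq_zero.1 h₂)⟩

theorem exists_curve_meets_horizontal_translate {A b : ℝ → ℝ} (hA : Continuous A)
    (hb : Continuous b) (hA_bot : ¬ BddBelow (range A)) (hA_top : ¬ BddAbove (range A))
    (hb_range : IsCompact (range b)) (c : ℝ) :
    ∃ s t, A s = A t + c ∧ b s = b t := by
  obtain ⟨_, ⟨t₀, rfl⟩, ht₀⟩ := hb_range.exists_isGreatest (range_nonempty b)
  obtain ⟨_, ⟨t₁, rfl⟩, ht₁⟩ := hb_range.exists_isLeast (range_nonempty b)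
  let σ : ℝ → ℝ := fun v ↦ t₀ + v * (t₁ - t₀)
  let β : ℝ → ℝ × ℝ := fun v ↦ (A (σ v) + c, b (σ v))
  obtain ⟨m, hm⟩ := (isCompact_Icc.image (f := fun v ↦ (β v).1) (by fun_prop)).bddBelow
  obtain ⟨M, hM⟩ := (isCompact_Icc.image (f := fun v ↦ (β v).1) (by fun_prop)).bddAbove
  obtain ⟨_, ⟨s₀, rfl⟩, hs₀⟩ := not_bddBelow_iff.1 hA_bot m
  obtain ⟨_, ⟨s₁, rfl⟩, hs₁⟩ := not_bddAbove_iff.1 hA_top M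
  let ρ : ℝ → ℝ := fun u ↦ s₀ + u * (s₁ - s₀)
  obtain ⟨u, -, v, -, huv⟩ := exists_eq_of_crossing (α := fun u ↦ (A (ρ u), b (ρ u))) (β := β)
    (by fun_prop) (by fun_prop)
    (fun v hv ↦ by
      simpa [ρ] using And.intro (hs₀.le.trans (hm (mem_image_of_mem _ hv)))
        ((hM (mem_image_of_mem _ hv)).trans hs₁.le))
    (fun u _ ↦ by simpa [β, σ] using And.intro (ht₁ ⟨ρ u, rfl⟩) (ht₀ ⟨ρ u, rfl⟩))
  exact ⟨ρ u, σ v, congrArg Prod.fst huv, congrArg Prod.snd huv⟩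

theorem exists_continuous_lift_add_int_mul {p T : ℝ} {a : ℝ → AddCircle p} (ha : Continuous a)
    (hper : Function.Periodic a T) :
    ∃ A : ℝ → ℝ, Continuous A ∧ (∀ s, (A s : AddCircle p) = a s) ∧
      ∃ d : ℤ, ∀ s, A (s + T) = A s + d * p := by
  obtain ⟨e₀, he₀⟩ := QuotientAddGroup.mk_surjective (a 0)
  obtain ⟨A, ⟨-, hA⟩, -⟩ := (AddCircle.isCoveringMap_coe p).existsUnique_continuousMap_lifts
    ⟨a, ha⟩ 0 e₀ he₀
  have hlift : ∀ s, (A s : AddCircle p) = a s := congrFun hA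
  obtain ⟨d, hd⟩ := (AddCircle.coe_eq_zero_iff p).1
    (show ((A T - A 0 : ℝ) : AddCircle p) = 0 by simpa [hlift, sub_eq_zero] using hper 0)
  refine ⟨A, A.continuous, hlift, d, fun s ↦ congrFun ((AddCircle.isCoveringMap_coe p).eq_of_comp_eq
    (g₁ := fun s ↦ A (s + T)) (g₂ := fun s ↦ A s + d * p) (by fun_prop) (by fun_prop) ?_ 0 ?_) s⟩
  · funext s
    simp [hlift, hper s]
  · rw [zsmul_eq_mul] at hd
    simp [hd]

theorem not_bddBelow_and_not_bddAbove_range_of_add_one {A : ℝ → ℝ} {d : ℤ}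
    (h : ∀ s, A (s + 1) = A s + d) (hd : d ≠ 0) :
    ¬ BddBelow (range A) ∧ ¬ BddAbove (range A) := by
  have hA : ∀ n : ℤ, A n = A 0 + n * d := by
    intro n
    induction n using Int.induction_on with
    | zero => simp
    | succ n ih => push_cast at ih ⊢; rw [h, ih]; ring
    | pred n ih =>
      have := h (-n - 1 : ℤ)
      push_cast at this ih ⊢
      rw [sub_add_cancel] at this
      linarith
  have hd_sq : (1 : ℝ) ≤ d * d := by
    have := Int.one_le_abs hd
    exact_mod_cast (by nlinarith [abs_mul_abs_self d] : (1 : ℤ) ≤ d * d)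
  constructor
  · rintro ⟨M, hM⟩
    obtain ⟨n, hn⟩ := exists_nat_gt (A 0 - M)
    have := hM ⟨_, rfl⟩ |>.trans_eq (hA (-n * d))
    push_cast at this
    nlinarith
  · rintro ⟨M, hM⟩
    obtain ⟨n, hn⟩ := exists_nat_gt (M - A 0)
    have := (hA (n * d)).symm.trans_le (hM ⟨_, rfl⟩)
    push_cast at this
    nlinarith

theorem ContinuousMap.nullhomotopic_of_lift_fst {X : Type*} [TopologicalSpace X] {p : ℝ}
    (f : C(X, AddCircle p × ℝ)) (F : C(X, ℝ)) (hF : ∀ x, (F x : AddCircle p) = (f x).1) :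
    f.Nullhomotopic := by
  have hf : f = ((⟨(↑), continuous_quotient_mk'⟩ : C(ℝ, AddCircle p)).prodMap
      (ContinuousMap.id ℝ)).comp (F.prodMk (ContinuousMap.snd.comp f)) := by
    ext x <;> simp [hF]
  rw [hf, ← ContinuousMap.id_comp (F.prodMk _)]
  exact ((id_nullhomotopic (ℝ × ℝ)).comp_left _).comp_right _

/-- On the cylinder `C = (ℝ/ℤ) × ℝ`, a closed curve `γ` that is not null-homotopic meets
every rotation `γ_l : t ↦ γ(t) + (l,0)` of itself: `Im(γ) ∩ Im(γ_l) ≠ ∅`. -/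
theorem rotated_curve_intersects
    (γ : C(AddCircle (1 : ℝ), AddCircle (1 : ℝ) × ℝ))
    (hγ : ∀ c : AddCircle (1 : ℝ) × ℝ,
      ¬ ContinuousMap.Homotopic γ (ContinuousMap.const _ c)) :
    ∀ l : AddCircle (1 : ℝ),
      (Set.range γ ∩ Set.range (fun t => γ t + ((l, 0) : AddCircle (1 : ℝ) × ℝ))).Nonempty := by
  intro l
  obtain ⟨c, rfl⟩ := QuotientAddGroup.mk_surjective l
  obtain ⟨A, hA, hlift, d, hd⟩ := exists_continuous_lift_add_int_mul (p := 1) (T := 1)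
    (a := fun s ↦ (γ s).1) (by fun_prop) fun s ↦ by simp
  simp only [mul_one] at hd
  let b : ℝ → ℝ := fun s ↦ (γ s).2
  rcases eq_or_ne d 0 with rfl | hd₀
  · have hper : Function.Periodic A 1 := fun s ↦ by simpa using hd s
    obtain ⟨z, hz⟩ := γ.nullhomotopic_of_lift_fst ⟨hper.lift, continuous_coinduced_dom.2 hA⟩
      fun z ↦ QuotientAddGroup.induction_on z hlift
    exact absurd hz (hγ z)
  obtain ⟨hA_bot, hA_top⟩ := not_bddBelow_and_not_bddAbove_range_of_add_one hd hd₀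
  obtain ⟨s, t, hAst, hbst⟩ := exists_curve_meets_horizontal_translate (b := b) hA
    (by fun_prop) hA_bot hA_top
    (Function.Periodic.compact_of_continuous (fun s ↦ by simp [b]) one_ne_zero (by fun_prop)) c
  refine ⟨γ s, ⟨s, rfl⟩, t, Prod.ext ?_ ?_⟩
  · simp [← hlift, hAst]
  · simpa [b] using hbst.symm
end

section
/- Define ρ(x) := min{ (−1/log x)^{1/2}, (2/3)^{3/2}·( (e^{3/2}/2)·x + 1 ) } for x > 0 and ρ(0)=0, and d(x,y) := ρ(|x−y|). Then (ℝ,d) is a proper translation-invariant metric space whose Hausdorff dimension is infinite. -/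
open MeasureTheory ENNReal NNReal
open Topology Filter

/-- The function `ρ(x) = min{ √(−1/log x), (2/3)^{3/2}·((e^{3/2}/2)·x + 1) }` (for
`0 < x < 1`; the minimum is realized by the linear branch for `x ≥ 1`), `ρ(0) = 0`. -/
noncomputable def rhoLog (x : ℝ) : ℝ :=
  if x ≤ 0 then 0
  else if x < 1 then
    min (Real.sqrt (-(1 / Real.log x)))
      ((2 / 3 : ℝ) ^ ((3 : ℝ) / 2) * (Real.exp ((3 : ℝ) / 2) / 2 * x + 1))
  else (2 / 3 : ℝ) ^ ((3 : ℝ) / 2) * (Real.exp ((3 : ℝ) / 2) / 2 * x + 1)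

namespace RhoAux

noncomputable def cC : ℝ := (2/3 : ℝ) ^ ((3:ℝ)/2)
noncomputable def aA : ℝ := Real.exp ((3:ℝ)/2) / 2
noncomputable def linB (x : ℝ) : ℝ := cC * (aA * x + 1)
noncomputable def fB (x : ℝ) : ℝ := (Real.sqrt (-Real.log x))⁻¹
noncomputable def x0 : ℝ := Real.exp (-((3:ℝ)/2))
noncomputable def phi (u : ℝ) : ℝ := cC * (aA * Real.exp (-u) + 1) - (Real.sqrt u)⁻¹

lemma cC_pos : 0 < cC := Real.rpow_pos_of_pos (by norm_num) _
lemma cC_le_one : cC ≤ 1 := Real.rpow_le_one (by norm_num) (by norm_num) (by norm_num)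
lemma aA_pos : 0 < aA := by unfold aA; positivity
lemma x0_pos : 0 < x0 := Real.exp_pos _
lemma x0_lt_one : x0 < 1 := Real.exp_lt_one_iff.2 (by norm_num)

lemma sqrt_rewrite (x : ℝ) : Real.sqrt (-(1 / Real.log x)) = fB x := by
  rw [fB, one_div, ← inv_neg, Real.sqrt_inv]

lemma linB_pos {x : ℝ} (hx : 0 ≤ x) : 0 < linB x := by
  have := aA_pos; have := cC_pos; unfold linB; nlinarith [mul_nonneg aA_pos.le hx]

lemma cC_le_linB {x : ℝ} (hx : 0 ≤ x) : cC ≤ linB x := by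
  have := aA_pos; have := cC_pos; unfold linB; nlinarith [mul_nonneg aA_pos.le hx]

lemma phi_hasDeriv {u : ℝ} (hu : 0 < u) :
    HasDerivAt phi
      (cC * (aA * (Real.exp (-u) * (-1))) - -(1 / (2 * Real.sqrt u)) / Real.sqrt u ^ 2) u := by
  have hsq : Real.sqrt u ≠ 0 := by positivity
  have h1 : HasDerivAt (fun v : ℝ => Real.exp (-v)) (Real.exp (-u) * (-1)) u :=
    (hasDerivAt_neg u).exp
  have h2 : HasDerivAt (fun v : ℝ => (Real.sqrt v)⁻¹)
      (-(1 / (2 * Real.sqrt u)) / Real.sqrt u ^ 2) u :=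
    (Real.hasDerivAt_sqrt hu.ne').inv hsq
  exact (((h1.const_mul aA).add_const 1).const_mul cC).sub h2

lemma phi_deriv_nonneg {u : ℝ} (hu : 0 < u) :
    0 ≤ cC * (aA * (Real.exp (-u) * (-1))) - -(1 / (2 * Real.sqrt u)) / Real.sqrt u ^ 2 := by
  have hsq : 0 < Real.sqrt u := Real.sqrt_pos.2 hu
  have hkey : 2 * cC * aA * Real.exp (-u) * (u * Real.sqrt u) ≤ 1 := by
    have hbase : (0:ℝ) ≤ 2/3 * u * Real.exp (1 - 2/3 * u) := by positivity
    have h1 : 2/3 * u * Real.exp (1 - 2/3 * u) ≤ 1 := by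
      have h := Real.add_one_le_exp (2/3 * u - 1)
      have hpos := Real.exp_pos (1 - 2/3 * u)
      have hm := mul_le_mul_of_nonneg_right h hpos.le
      have hid : Real.exp (2/3*u - 1) * Real.exp (1 - 2/3*u) = 1 := by
        rw [← Real.exp_add]; norm_num
      nlinarith
    have h2 : (2/3 * u * Real.exp (1 - 2/3 * u)) ^ ((3:ℝ)/2) ≤ 1 :=
      Real.rpow_le_one hbase h1 (by norm_num)
    have he : (Real.exp (1 - 2/3 * u)) ^ ((3:ℝ)/2) = Real.exp ((3:ℝ)/2) * Real.exp (-u) := by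
      rw [← Real.exp_one_rpow (1 - 2/3*u), ← Real.rpow_mul (Real.exp_pos 1).le,
        Real.exp_one_rpow, show (1 - 2/3*u) * ((3:ℝ)/2) = 3/2 + -u by ring, Real.exp_add]
    have hu32 : u ^ ((3:ℝ)/2) = u * Real.sqrt u := by
      rw [show (3:ℝ)/2 = 1 + 1/2 by norm_num, Real.rpow_add hu, Real.rpow_one,
        ← Real.sqrt_eq_rpow]
    have h3 : (2/3 * u * Real.exp (1 - 2/3 * u)) ^ ((3:ℝ)/2)
        = 2 * cC * aA * Real.exp (-u) * (u * Real.sqrt u) := by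
      rw [Real.mul_rpow (by positivity) (Real.exp_pos _).le,
        Real.mul_rpow (by norm_num) hu.le, he, hu32, cC, aA]
      ring
    linarith [h3 ▸ h2]
  have hformula : -(1 / (2 * Real.sqrt u)) / Real.sqrt u ^ 2 = -(1 / (2 * (u * Real.sqrt u))) := by
    rw [Real.sq_sqrt hu.le]
    field_simp
  rw [hformula, sub_neg_eq_add,
    show cC * (aA * (Real.exp (-u) * (-1))) = -(cC * aA * Real.exp (-u)) by ring,
    neg_add_eq_sub, sub_nonneg, le_div_iff₀ (by positivity)]
  nlinarith [hkey]

lemma phi_mono : MonotoneOn phi (Set.Ioi (0:ℝ)) := by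
  refine monotoneOn_of_deriv_nonneg (convex_Ioi 0) ?_ ?_ ?_
  · exact fun u hu => ((phi_hasDeriv hu).continuousAt).continuousWithinAt
  · rw [interior_Ioi]
    exact fun u hu => ((phi_hasDeriv hu).differentiableAt).differentiableWithinAt
  · rw [interior_Ioi]
    intro u hu
    rw [(phi_hasDeriv hu).deriv]
    exact phi_deriv_nonneg hu

lemma phi_at : phi ((3:ℝ)/2) = 0 := by
  have h1 : aA * Real.exp (-((3:ℝ)/2)) = 1/2 := by
    rw [aA, div_mul_eq_mul_div, ← Real.exp_add]
    norm_num
  have h2 : cC * ((3:ℝ)/2) = (Real.sqrt ((3:ℝ)/2))⁻¹ := by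
    rw [cC, show (3:ℝ)/2 = 1/2 + 1 by norm_num,
      Real.rpow_add (by norm_num : (0:ℝ) < 2/3), Real.rpow_one,
      ← Real.sqrt_eq_rpow, ← Real.sqrt_inv]
    norm_num
    ring
  rw [phi, show aA * Real.exp (-((3:ℝ)/2)) + 1 = (3:ℝ)/2 by rw [h1]; norm_num, ← h2]
  ring_nf

lemma phi_nonneg {u : ℝ} (hu : (3:ℝ)/2 ≤ u) : 0 ≤ phi u := by
  have := phi_mono (Set.mem_Ioi.2 (by norm_num : (0:ℝ) < 3/2))
    (Set.mem_Ioi.2 (lt_of_lt_of_le (by norm_num) hu)) hu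
  rw [phi_at] at this; exact this

lemma phi_nonpos {u : ℝ} (hu0 : 0 < u) (hu : u ≤ (3:ℝ)/2) : phi u ≤ 0 := by
  have := phi_mono (Set.mem_Ioi.2 hu0) (Set.mem_Ioi.2 (by norm_num : (0:ℝ) < 3/2)) hu
  rw [phi_at] at this; exact this

lemma phi_eq {x : ℝ} (hx : 0 < x) : phi (-Real.log x) = linB x - fB x := by
  rw [phi, linB, fB, neg_neg, Real.exp_log hx]

lemma log_le_iff {x : ℝ} (hx : 0 < x) : x ≤ x0 ↔ (3:ℝ)/2 ≤ -Real.log x := by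
  rw [x0, ← Real.log_le_log_iff hx (Real.exp_pos _), Real.log_exp]
  constructor <;> intro h <;> linarith

lemma rhoLog_eq {x : ℝ} (hx : 0 < x) :
    rhoLog x = if x ≤ x0 then fB x else linB x := by
  rw [rhoLog, if_neg (not_le.2 hx)]
  rcases lt_or_ge x 1 with hx1 | hx1
  · rw [if_pos hx1, sqrt_rewrite,
      show ((2/3:ℝ)^((3:ℝ)/2) * (Real.exp ((3:ℝ)/2)/2 * x + 1)) = linB x from rfl]
    have hlog : Real.log x < 0 := Real.log_neg hx hx1
    rcases le_or_gt x x0 with hcase | hcase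
    · rw [if_pos hcase]
      have h := phi_nonneg ((log_le_iff hx).1 hcase)
      rw [phi_eq hx] at h
      exact min_eq_left (by linarith)
    · rw [if_neg (not_le.2 hcase)]
      have hnl : ¬ (3:ℝ)/2 ≤ -Real.log x := by
        rw [← log_le_iff hx]; exact not_le.2 hcase
      have h := phi_nonpos (u := -Real.log x) (by linarith) (by linarith [not_le.1 hnl])
      rw [phi_eq hx] at h
      exact min_eq_right (by linarith)
  · rw [if_neg (not_lt.2 hx1), if_neg (not_le.2 (lt_of_lt_of_le x0_lt_one hx1))]
    rfl

lemma fB_boundary : fB x0 = linB x0 := by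
  have h := phi_at
  have : phi (-Real.log x0) = linB x0 - fB x0 := phi_eq x0_pos
  rw [x0, Real.log_exp, neg_neg] at this
  rw [this] at h
  rw [show x0 = Real.exp (-((3:ℝ)/2)) from rfl]
  linarith

lemma neglog_pos {x : ℝ} (hx : 0 < x) (hx1 : x < 1) : 0 < -Real.log x := by
  have := Real.log_neg hx hx1; linarith

lemma fB_pos {x : ℝ} (hx : 0 < x) (hx1 : x < 1) : 0 < fB x := by
  rw [fB]
  exact inv_pos.2 (Real.sqrt_pos.2 (neglog_pos hx hx1))

lemma fB_mono {x y : ℝ} (hx : 0 < x) (hxy : x ≤ y) (hy1 : y < 1) : fB x ≤ fB y := by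
  rw [fB, fB]
  have hy := lt_of_lt_of_le hx hxy
  have h1 : -Real.log y ≤ -Real.log x := by
    have := Real.log_le_log hx hxy
    linarith
  exact inv_anti₀ (Real.sqrt_pos.2 (neglog_pos hy hy1)) (Real.sqrt_le_sqrt h1)

lemma linB_mono {x y : ℝ} (hxy : x ≤ y) : linB x ≤ linB y := by
  rw [linB, linB]
  have := cC_pos
  nlinarith [mul_le_mul_of_nonneg_left hxy aA_pos.le]

lemma rhoLog_nonpos_val {x : ℝ} (hx : x ≤ 0) : rhoLog x = 0 := by rw [rhoLog, if_pos hx]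

lemma rhoLog_pos {x : ℝ} (hx : 0 < x) : 0 < rhoLog x := by
  rw [rhoLog_eq hx]
  split
  · exact fB_pos hx (lt_of_le_of_lt (by assumption) x0_lt_one)
  · exact linB_pos hx.le

lemma rhoLog_nonneg (x : ℝ) : 0 ≤ rhoLog x := by
  rcases le_or_gt x 0 with h | h
  · rw [rhoLog_nonpos_val h]
  · exact (rhoLog_pos h).le

lemma rhoLog_mono : Monotone rhoLog := by
  intro x y hxy
  rcases le_or_gt x 0 with hx | hx
  · rw [rhoLog_nonpos_val hx]; exact rhoLog_nonneg y
  have hy : 0 < y := lt_of_lt_of_le hx hxy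
  rw [rhoLog_eq hx, rhoLog_eq hy]
  rcases le_or_gt y x0 with hyx0 | hyx0
  · rw [if_pos (hxy.trans hyx0), if_pos hyx0]
    exact fB_mono hx hxy (lt_of_le_of_lt hyx0 x0_lt_one)
  · rw [if_neg (not_le.2 hyx0)]
    rcases le_or_gt x x0 with hxx0 | hxx0
    · rw [if_pos hxx0]
      calc fB x ≤ fB x0 := fB_mono hx hxx0 x0_lt_one
        _ = linB x0 := fB_boundary
        _ ≤ linB y := linB_mono hyx0.le
    · rw [if_neg (not_le.2 hxx0)]
      exact linB_mono hxy

lemma linB_ratio {p q : ℝ} (hp : 0 < p) (hpq : p ≤ q) : linB q / q ≤ linB p / p := by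
  have hq : 0 < q := lt_of_lt_of_le hp hpq
  rw [div_le_div_iff₀ hq hp, linB, linB]
  have := cC_pos; have := aA_pos
  nlinarith

lemma fB_ratio {p q : ℝ} (hp : 0 < p) (hpq : p ≤ q) (hq0 : q ≤ x0) : fB q / q ≤ fB p / p := by
  have hq : 0 < q := lt_of_lt_of_le hp hpq
  set up := -Real.log p with hup
  set uq := -Real.log q with huq
  have hq1 : q < 1 := lt_of_le_of_lt hq0 x0_lt_one
  have huqpos : 0 < uq := neglog_pos hq hq1
  have huppos : 0 < up := neglog_pos hp (lt_of_le_of_lt hpq hq1)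
  have huq32 : (3:ℝ)/2 ≤ uq := (log_le_iff hq).1 hq0
  have hupuq : uq ≤ up := by
    have := Real.log_le_log hp hpq; rw [hup, huq]; linarith
  set w := up - uq with hw
  have hwnn : 0 ≤ w := by linarith
  -- sqrt up ≤ sqrt uq * exp w
  have hsqrt : Real.sqrt up ≤ Real.sqrt uq * Real.exp w := by
    have h1 : up ≤ uq * Real.exp (2*w) := by
      have he : 1 + 2*w ≤ Real.exp (2*w) := by
        have := Real.add_one_le_exp (2*w); linarith
      nlinarith
    calc Real.sqrt up ≤ Real.sqrt (uq * Real.exp (2*w)) := Real.sqrt_le_sqrt h1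
      _ = Real.sqrt uq * Real.exp w := by
        rw [Real.sqrt_mul huqpos.le, show (2:ℝ)*w = w + w by ring, Real.exp_add,
          ← sq, Real.sqrt_sq (Real.exp_pos w).le]
  -- p * sqrt up ≤ q * sqrt uq
  have hmain : p * Real.sqrt up ≤ q * Real.sqrt uq := by
    have hpe : p = Real.exp (-up) := by rw [hup, neg_neg, Real.exp_log hp]
    have hqe : q = Real.exp (-uq) := by rw [huq, neg_neg, Real.exp_log hq]
    rw [hpe, hqe]
    calc Real.exp (-up) * Real.sqrt up ≤ Real.exp (-up) * (Real.sqrt uq * Real.exp w) :=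
          mul_le_mul_of_nonneg_left hsqrt (Real.exp_pos _).le
      _ = Real.exp (-uq) * Real.sqrt uq := by
          rw [hw, show Real.exp (-up) * (Real.sqrt uq * Real.exp (up - uq))
            = Real.exp (-up) * Real.exp (up - uq) * Real.sqrt uq by ring, ← Real.exp_add]
          ring_nf
  have hfp : fB p / p = (p * Real.sqrt up)⁻¹ := by
    rw [fB, ← hup, mul_inv, div_eq_mul_inv, mul_comm]
  have hfq : fB q / q = (q * Real.sqrt uq)⁻¹ := by
    rw [fB, ← huq, mul_inv, div_eq_mul_inv, mul_comm]
  rw [hfp, hfq]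
  exact inv_anti₀ (by positivity) hmain

lemma rhoLog_ratio {s t : ℝ} (hs : 0 < s) (hst : s ≤ t) : rhoLog t / t ≤ rhoLog s / s := by
  have ht : 0 < t := lt_of_lt_of_le hs hst
  rw [rhoLog_eq hs, rhoLog_eq ht]
  rcases le_or_gt t x0 with htx0 | htx0
  · rw [if_pos (hst.trans htx0), if_pos htx0]
    exact fB_ratio hs hst htx0
  · rw [if_neg (not_le.2 htx0)]
    rcases le_or_gt s x0 with hsx0 | hsx0
    · rw [if_pos hsx0]
      calc linB t / t ≤ linB x0 / x0 := linB_ratio x0_pos htx0.le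
        _ = fB x0 / x0 := by rw [fB_boundary]
        _ ≤ fB s / s := fB_ratio hs hsx0 le_rfl
    · rw [if_neg (not_le.2 hsx0)]
      exact linB_ratio hs hst

lemma rhoLog_subadd {s t : ℝ} (hs : 0 ≤ s) (ht : 0 ≤ t) :
    rhoLog (s + t) ≤ rhoLog s + rhoLog t := by
  rcases eq_or_lt_of_le hs with rfl | hs'
  · rw [zero_add, rhoLog_nonpos_val le_rfl, zero_add]
  rcases eq_or_lt_of_le ht with rfl | ht'
  · rw [add_zero, rhoLog_nonpos_val le_rfl, add_zero]
  have hst : 0 < s + t := by linarith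
  have h1 := rhoLog_ratio hs' (le_add_of_nonneg_right ht)
  have h2 := rhoLog_ratio ht' (le_add_of_nonneg_left hs)
  have e1 : s * (rhoLog (s+t) / (s+t)) ≤ rhoLog s := by
    have := mul_le_mul_of_nonneg_left h1 hs
    rwa [mul_div_cancel₀ _ hs'.ne'] at this
  have e2 : t * (rhoLog (s+t) / (s+t)) ≤ rhoLog t := by
    have := mul_le_mul_of_nonneg_left h2 ht
    rwa [mul_div_cancel₀ _ ht'.ne'] at this
  have key : rhoLog (s+t) = s * (rhoLog (s+t) / (s+t)) + t * (rhoLog (s+t) / (s+t)) := by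
    field_simp
  linarith

lemma rhoLog_small {ε : ℝ} (hε : 0 < ε) :
    ∃ δ > 0, ∀ t : ℝ, t < δ → rhoLog t < ε := by
  refine ⟨Real.exp (-(1 + ε⁻¹^2)), Real.exp_pos _, fun t ht => ?_⟩
  rcases le_or_gt t 0 with h0 | h0
  · rw [rhoLog_nonpos_val h0]; exact hε
  have ht1 : t < 1 := lt_trans ht (Real.exp_lt_one_iff.2 (by nlinarith [sq_nonneg ε⁻¹]))
  have hlog : Real.log t < -(1 + ε⁻¹^2) := by
    calc Real.log t < Real.log (Real.exp (-(1 + ε⁻¹^2))) := Real.log_lt_log h0 ht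
      _ = -(1 + ε⁻¹^2) := Real.log_exp _
  have hu : ε⁻¹^2 < -Real.log t := by linarith
  have hs : ε⁻¹ < Real.sqrt (-Real.log t) := by
    calc ε⁻¹ = Real.sqrt (ε⁻¹^2) := (Real.sqrt_sq (by positivity)).symm
      _ < Real.sqrt (-Real.log t) := Real.sqrt_lt_sqrt (by positivity) hu
  have hfb : fB t < ε := by
    rw [fB]
    have h1 : 0 < Real.sqrt (-Real.log t) := lt_trans (by positivity) hs
    calc (Real.sqrt (-Real.log t))⁻¹ < (ε⁻¹)⁻¹ := by
          exact inv_strictAnti₀ (by positivity) hs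
      _ = ε := inv_inv ε
  calc rhoLog t ≤ fB t := by
        rw [rhoLog, if_neg (not_le.2 h0), if_pos ht1, sqrt_rewrite]
        exact min_le_left _ _
    _ < ε := hfb

lemma rhoLog_big (R : ℝ) : ∃ M : ℝ, 0 < M ∧ ∀ t : ℝ, M ≤ t → R ≤ rhoLog t := by
  refine ⟨max 1 (R / (cC * aA)), lt_of_lt_of_le one_pos (le_max_left _ _), fun t htM => ?_⟩
  have ht1 : (1:ℝ) ≤ t := le_trans (le_max_left _ _) htM
  have htR : R / (cC * aA) ≤ t := le_trans (le_max_right _ _) htM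
  have ht : 0 < t := lt_of_lt_of_le one_pos ht1
  have hca : 0 < cC * aA := mul_pos cC_pos aA_pos
  have h1 : R ≤ cC * aA * t := by
    rw [div_le_iff₀ hca] at htR; linarith [htR]
  have h2 : rhoLog t = linB t := by
    rw [rhoLog_eq ht, if_neg (not_le.2 (lt_of_lt_of_le x0_lt_one ht1))]
  rw [h2, linB]
  nlinarith [cC_pos]

end RhoAux

open RhoAux Topology Filter

def RhoReal : Type := ℝ

namespace RhoReal

def toReal : RhoReal → ℝ := id

noncomputable instance instMS : MetricSpace RhoReal where
  dist x y := rhoLog |toReal x - toReal y|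
  dist_self x := by
    show rhoLog |toReal x - toReal x| = 0
    simp [rhoLog_nonpos_val]
  dist_comm x y := by
    show rhoLog |toReal x - toReal y| = rhoLog |toReal y - toReal x|
    rw [abs_sub_comm]
  dist_triangle x y z := by
    show rhoLog |toReal x - toReal z| ≤ rhoLog |toReal x - toReal y| + rhoLog |toReal y - toReal z|
    refine le_trans ?_ (rhoLog_subadd (abs_nonneg _) (abs_nonneg _))
    exact rhoLog_mono (abs_sub_le _ _ _)
  eq_of_dist_eq_zero := by
    intro x y h
    replace h : rhoLog |toReal x - toReal y| = 0 := h
    by_contra hne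
    have hxy : toReal x - toReal y ≠ 0 := sub_ne_zero.2 fun hh => hne hh
    have := rhoLog_pos (abs_pos.2 hxy)
    linarith

@[reducible] def stdTop : TopologicalSpace RhoReal := inferInstanceAs (TopologicalSpace ℝ)

theorem topology_eq : (inferInstance : TopologicalSpace RhoReal) = stdTop := by
  refine TopologicalSpace.ext_nhds fun x => ?_
  have hb1 : (𝓝 x).HasBasis (fun ε : ℝ => 0 < ε) (Metric.ball x) := Metric.nhds_basis_ball
  have hb2 : (@nhds RhoReal stdTop x).HasBasis (fun ε : ℝ => 0 < ε)
      (fun ε => {y : RhoReal | |toReal y - toReal x| < ε}) :=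
    Metric.nhds_basis_ball (α := ℝ) (x := toReal x)
  refine hb1.ext hb2 ?_ ?_
  · -- for each d-ball, a std ball inside it
    intro ε hε
    obtain ⟨δ, hδ, hδε⟩ := rhoLog_small hε
    exact ⟨δ, hδ, fun y hy => by
      simp only [Metric.mem_ball, Set.mem_setOf_eq] at *
      exact hδε _ hy⟩
  · -- for each std ball, a d-ball inside it
    intro ε hε
    refine ⟨rhoLog ε, rhoLog_pos hε, fun y hy => ?_⟩
    simp only [Metric.mem_ball, Set.mem_setOf_eq] at *
    by_contra hcon
    have : rhoLog ε ≤ rhoLog |toReal y - toReal x| := rhoLog_mono (not_lt.1 hcon)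
    have hd : dist y x = rhoLog |toReal y - toReal x| := rfl
    rw [hd] at hy
    linarith

theorem compact_iff (s : Set RhoReal) :
    IsCompact s ↔ @IsCompact RhoReal stdTop s :=
  iff_of_eq (congrArg (fun t => @IsCompact RhoReal t s) topology_eq)

theorem closed_iff (s : Set RhoReal) :
    IsClosed s ↔ @IsClosed RhoReal stdTop s :=
  iff_of_eq (congrArg (fun t => @IsClosed RhoReal t s) topology_eq)

instance instProper : ProperSpace RhoReal := by
  constructor
  intro x r
  rw [compact_iff]
  obtain ⟨M, hM, hMlarge⟩ := rhoLog_big (r + 1)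
  have hsub : Metric.closedBall x r ⊆
      {y : RhoReal | toReal y ∈ Set.Icc (toReal x - M) (toReal x + M)} := by
    intro y hy
    rw [Metric.mem_closedBall] at hy
    have hd : dist y x = rhoLog |toReal y - toReal x| := rfl
    rw [hd] at hy
    have : ¬ (M ≤ |toReal y - toReal x|) := fun hMle => by
      have := hMlarge _ hMle; linarith
    have habs := not_le.1 this
    rw [abs_lt] at habs
    simp only [Set.mem_setOf_eq, Set.mem_Icc]
    constructor <;> linarith [habs.1, habs.2]
  have hclosed : @IsClosed RhoReal stdTop (Metric.closedBall x r) :=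
    (closed_iff _).1 Metric.isClosed_closedBall
  have hcompact : @IsCompact RhoReal stdTop
      {y : RhoReal | toReal y ∈ Set.Icc (toReal x - M) (toReal x + M)} := by
    have h : IsCompact (Set.Icc (toReal x - M) (toReal x + M)) := isCompact_Icc
    exact h
  exact @IsCompact.of_isClosed_subset RhoReal stdTop _ _ hcompact hclosed hsub

end RhoReal

namespace RhoReal

lemma key_real (n : ℕ) (hn : 1 ≤ n) {t : ℝ} (ht0 : 0 ≤ t) (ht1 : t ≤ 1) :
    t ≤ (cC⁻¹ ^ n * (n:ℝ) ^ n) * rhoLog t ^ n := by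
  have hn0 : (0:ℝ) < n := by exact_mod_cast hn
  have hKn : (1:ℝ) ≤ cC⁻¹ ^ n := one_le_pow₀ (one_le_inv_iff₀.2 ⟨cC_pos, cC_le_one⟩)
  rcases eq_or_lt_of_le ht0 with rfl | ht0'
  · have : 0 ≤ (cC⁻¹ ^ n * (n:ℝ) ^ n) * rhoLog 0 ^ n := by
      have := rhoLog_nonneg 0
      positivity
    linarith
  rcases le_or_gt t x0 with hcase | hcase
  · -- sqrt branch
    have ht1' : t < 1 := lt_of_le_of_lt hcase x0_lt_one
    set u := -Real.log t with hu
    have hupos : 0 < u := neglog_pos ht0' ht1'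
    have hu32 : (3:ℝ)/2 ≤ u := (log_le_iff ht0').1 hcase
    have hrho : rhoLog t = (Real.sqrt u)⁻¹ := by
      rw [rhoLog_eq ht0', if_pos hcase, fB]
    have hsu : 0 < Real.sqrt u := Real.sqrt_pos.2 hupos
    have hsqu : Real.sqrt u ≤ u := by
      calc Real.sqrt u ≤ Real.sqrt (u^2) := Real.sqrt_le_sqrt (by nlinarith)
        _ = u := by rw [Real.sqrt_sq hupos.le]
    have hte : t = Real.exp (-u) := by rw [hu, neg_neg, Real.exp_log ht0']
    have hun : u ^ n ≤ (n:ℝ) ^ n * Real.exp u := by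
      have h1 : u ≤ (n:ℝ) * Real.exp (u / n) := by
        have h := Real.add_one_le_exp (u / n)
        have h2 : u / n ≤ Real.exp (u / n) := by linarith
        calc u = (n:ℝ) * (u / n) := by field_simp
          _ ≤ (n:ℝ) * Real.exp (u / n) := mul_le_mul_of_nonneg_left h2 hn0.le
      calc u ^ n ≤ ((n:ℝ) * Real.exp (u / n)) ^ n := pow_le_pow_left₀ hupos.le h1 n
        _ = (n:ℝ) ^ n * Real.exp u := by
          rw [mul_pow, ← Real.exp_nat_mul]
          congr 2
          field_simp
    have hmain : t * Real.sqrt u ^ n ≤ (n:ℝ) ^ n := by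
      calc t * Real.sqrt u ^ n ≤ t * u ^ n :=
            mul_le_mul_of_nonneg_left (pow_le_pow_left₀ hsu.le hsqu n) ht0
        _ ≤ Real.exp (-u) * ((n:ℝ) ^ n * Real.exp u) := by
            rw [← hte]
            exact mul_le_mul_of_nonneg_left hun ht0
        _ = (n:ℝ) ^ n := by
            rw [show Real.exp (-u) * ((n:ℝ)^n * Real.exp u)
              = (n:ℝ)^n * (Real.exp (-u) * Real.exp u) by ring, ← Real.exp_add]
            simp
    have hsn : 0 < Real.sqrt u ^ n := pow_pos hsu n
    have h2 : t ≤ (n:ℝ)^n * (Real.sqrt u ^ n)⁻¹ := by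
      rw [← div_eq_mul_inv, le_div_iff₀ hsn]
      exact hmain
    rw [hrho]
    calc t ≤ (n:ℝ)^n * (Real.sqrt u ^ n)⁻¹ := h2
      _ = 1 * ((n:ℝ)^n * (Real.sqrt u ^ n)⁻¹) := (one_mul _).symm
      _ ≤ cC⁻¹^n * ((n:ℝ)^n * (Real.sqrt u ^ n)⁻¹) :=
          mul_le_mul_of_nonneg_right hKn (by positivity)
      _ = (cC⁻¹^n * (n:ℝ)^n) * ((Real.sqrt u)⁻¹)^n := by
          rw [← inv_pow]
          ring
  · -- linear branch
    have hrho : rhoLog t = linB t := by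
      rw [rhoLog_eq ht0', if_neg (not_le.2 hcase)]
    have hcc : cC ^ n ≤ rhoLog t ^ n := by
      rw [hrho]
      exact pow_le_pow_left₀ cC_pos.le (cC_le_linB ht0'.le) n
    have hone : (1:ℝ) ≤ (n:ℝ) ^ n := one_le_pow₀ (by exact_mod_cast hn)
    calc t ≤ 1 := ht1
      _ = cC⁻¹ ^ n * cC ^ n := by
          rw [← mul_pow, inv_mul_cancel₀ cC_pos.ne', one_pow]
      _ ≤ cC⁻¹ ^ n * ((n:ℝ) ^ n * rhoLog t ^ n) := by
          have h1 : cC ^ n ≤ (n:ℝ) ^ n * rhoLog t ^ n := by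
            calc cC ^ n = 1 * cC ^ n := (one_mul _).symm
              _ ≤ (n:ℝ) ^ n * rhoLog t ^ n :=
                mul_le_mul hone hcc (pow_nonneg cC_pos.le n) (by positivity)
          exact mul_le_mul_of_nonneg_left h1 (pow_nonneg (inv_nonneg.2 cC_pos.le) n)
      _ = (cC⁻¹ ^ n * (n:ℝ) ^ n) * rhoLog t ^ n := by ring


lemma nat_le_dimH (n : ℕ) (hn : 1 ≤ n) : (n : ℝ≥0∞) ≤ dimH (Set.univ : Set RhoReal) := by
  set K : ℝ := cC⁻¹ ^ n * (n:ℝ) ^ n with hK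
  have hK0 : 0 ≤ K := by
    rw [hK]
    exact mul_nonneg (pow_nonneg (inv_nonneg.2 cC_pos.le) n) (by positivity)
  set s : Set RhoReal := toReal ⁻¹' (Set.Icc 0 1) with hs
  have hold : HolderOnWith K.toNNReal (n : ℝ≥0) toReal s := by
    intro x hx y hy
    have hx' : toReal x ∈ Set.Icc (0:ℝ) 1 := hx
    have hy' : toReal y ∈ Set.Icc (0:ℝ) 1 := hy
    rw [Set.mem_Icc] at hx' hy'
    have habs0 : 0 ≤ |toReal x - toReal y| := abs_nonneg _
    have habs1 : |toReal x - toReal y| ≤ 1 :=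
      abs_le.2 ⟨by linarith [hx'.1, hx'.2, hy'.1, hy'.2], by linarith [hx'.1, hx'.2, hy'.1, hy'.2]⟩
    have hreal : |toReal x - toReal y| ≤ K * rhoLog |toReal x - toReal y| ^ ((n:ℝ≥0) : ℝ) := by
      have := key_real n hn habs0 habs1
      rwa [show ((n:ℝ≥0) : ℝ) = (n : ℝ) by norm_cast, Real.rpow_natCast]
    have hedistXY : edist x y = ENNReal.ofReal (rhoLog |toReal x - toReal y|) := by
      rw [edist_dist]; rfl
    have hedistR : edist (toReal x) (toReal y) = ENNReal.ofReal |toReal x - toReal y| := by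
      rw [edist_dist, Real.dist_eq]
    rw [hedistXY, hedistR,
      ENNReal.ofReal_rpow_of_nonneg (rhoLog_nonneg _) (by positivity),
      show ((K.toNNReal : ℝ≥0∞)) = ENNReal.ofReal K from rfl,
      ← ENNReal.ofReal_mul hK0]
    exact ENNReal.ofReal_le_ofReal hreal
  have hnpos : (0 : ℝ≥0) < (n : ℝ≥0) := by exact_mod_cast hn
  have hdim := hold.dimH_image_le hnpos
  have himg : toReal '' s = Set.Icc (0:ℝ) 1 :=
    Set.image_preimage_eq _ (fun y => ⟨y, rfl⟩)
  rw [himg] at hdim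
  have hIcc : dimH (Set.Icc (0:ℝ) 1) = 1 := by
    have hmem : Set.Icc (0:ℝ) 1 ∈ nhds (1/2 : ℝ) :=
      Icc_mem_nhds (by norm_num) (by norm_num)
    rw [Real.dimH_of_mem_nhds hmem, Module.finrank_self]
    norm_num
  rw [hIcc] at hdim
  have hne0 : ((n:ℝ≥0) : ℝ≥0∞) ≠ 0 := by
    simp only [ne_eq, ENNReal.coe_eq_zero]
    exact_mod_cast Nat.one_le_iff_ne_zero.1 hn
  rw [ENNReal.le_div_iff_mul_le (Or.inl hne0) (Or.inl ENNReal.coe_ne_top), one_mul] at hdim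
  calc (n : ℝ≥0∞) = ((n:ℝ≥0) : ℝ≥0∞) := by norm_cast
    _ ≤ dimH s := hdim
    _ ≤ dimH (Set.univ : Set RhoReal) := dimH_mono (Set.subset_univ _)

theorem dimH_univ_top : dimH (Set.univ : Set RhoReal) = ⊤ := by
  by_contra h
  obtain ⟨n, hn⟩ := ENNReal.exists_nat_gt h
  have h1 := nat_le_dimH (n+1) (Nat.le_add_left 1 n)
  have h2 : ((n:ℕ):ℝ≥0∞) ≤ (((n+1:ℕ)):ℝ≥0∞) := by exact_mod_cast Nat.le_succ n
  exact absurd hn (not_lt.2 (le_trans (le_trans h2 h1) le_rfl))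

end RhoReal

/-- With `d(x,y) := ρ(|x−y|)` for the above `ρ`, `(ℝ,d)` is a proper translation-invariant
metric space whose Hausdorff dimension is infinite. -/
theorem rhoLog_metric_infinite_dimH :
    ∃ m : MetricSpace ℝ,
      (∀ x y : ℝ, @dist ℝ m.toPseudoMetricSpace.toDist x y = rhoLog |x - y|) ∧
      (∀ x y v : ℝ, @dist ℝ m.toPseudoMetricSpace.toDist (x + v) (y + v)
        = @dist ℝ m.toPseudoMetricSpace.toDist x y) ∧
      @ProperSpace ℝ m.toPseudoMetricSpace ∧
      @dimH ℝ (@MetricSpace.toEMetricSpace ℝ m) Set.univ = ⊤ := by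
  refine ⟨RhoReal.instMS, fun x y => rfl, fun x y v => ?_, RhoReal.instProper, RhoReal.dimH_univ_top⟩
  show rhoLog |x + v - (y + v)| = rhoLog |x - y|
  congr 1
  ring_nf
end

section
/- Let (X,d) be a metric space homeomorphic to ℝ on which the isometry group acts transitively. Then for any p,q ∈ X there exists a unique orientation-preserving isometry g of X with g(p) = q. -/
/-!
Read through `e`, every isometry `g` of `X` becomes a homeomorphism `G` of `ℝ`, hence is strictly
monotone or strictly antitone. If `G` is increasing and fixes `a`, it is the identity: were
`t < G t` for some `t ≤ a`, the orbit of `t` would increase to a fixed point `L`, and since `g`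
is an isometry fixing `e⁻¹ L`, the distance from `e⁻¹ (Gⁿ t)` to `e⁻¹ L` is constant and tends
to `0`, forcing `t = L`. The other cases follow by passing to `g⁻¹` and to `-e`. This gives
uniqueness. For existence, transitivity gives some `f` with `f p = q`; if it reverses orientation
it has a fixed point by the intermediate value theorem, conjugating `f` by an isometry moving that
point to `p` yields an orientation-reversing `k` fixing `p`, and `f ∘ k` works.
-/

open Filter Topology Function

theorem Isometry.eq_of_tendsto_iterate {X : Type*} [MetricSpace X] {f : X → X} (hf : Isometry f)
    {x y : X} (h : Tendsto (fun n => f^[n] x) atTop (𝓝 y)) : x = y := by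
  have hy : f y = y := by
    refine tendsto_nhds_unique ((hf.continuous.tendsto y).comp h) ?_
    simpa only [comp_def, iterate_succ_apply'] using h.comp (tendsto_add_atTop_nat 1)
  have hdist : ∀ n, dist (f^[n] x) y = dist x y := by
    intro n
    induction n with
    | zero => rfl
    | succ n ih =>
      calc dist (f^[n + 1] x) y = dist (f (f^[n] x)) (f y) := by rw [iterate_succ_apply', hy]
        _ = dist x y := by rw [hf.dist_eq, ih]
  have h0 := tendsto_iff_dist_tendsto_zero.1 h
  simp only [hdist] at h0
  exact dist_eq_zero.1 (tendsto_nhds_unique tendsto_const_nhds h0)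

theorem Monotone.exists_tendsto_iterate_of_le_map {α : Type*} [ConditionallyCompleteLinearOrder α]
    [TopologicalSpace α] [OrderTopology α] {f : α → α} (hf : Monotone f) {a x : α} (ha : f a = a)
    (hxa : x ≤ a) (hx : x ≤ f x) : ∃ L, f x ≤ L ∧ Tendsto (fun n => f^[n] x) atTop (𝓝 L) := by
  have hbdd : BddAbove (Set.range fun n => f^[n] x) :=
    ⟨a, by rintro _ ⟨n, rfl⟩; exact iterate_fixed ha n ▸ hf.iterate n hxa⟩
  exact ⟨_, le_ciSup hbdd 1, tendsto_atTop_ciSup (hf.monotone_iterate_of_le_map hx) hbdd⟩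

theorem Antitone.exists_isFixedPt {α : Type*} [LinearOrder α] [TopologicalSpace α]
    [OrderClosedTopology α] [PreconnectedSpace α] [Nonempty α] {f : α → α} (hf : Antitone f)
    (hc : Continuous f) : ∃ z, IsFixedPt f z := by
  obtain ⟨x⟩ := ‹Nonempty α›
  rcases le_total x (f x) with hx | hx
  · obtain ⟨z, hz⟩ := intermediate_value_univ₂ continuous_id hc hx (hf hx)
    exact ⟨z, hz.symm⟩
  · exact intermediate_value_univ₂ hc continuous_id hx (hf hx)

namespace IsometryEquiv

variable {X Y : Type*} [MetricSpace X] [TopologicalSpace Y]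

def conj (g : X ≃ᵢ X) (e : X ≃ₜ Y) : Y ≃ₜ Y :=
  (e.symm.trans g.toHomeomorph).trans e

@[simp]
theorem conj_apply (g : X ≃ᵢ X) (e : X ≃ₜ Y) (t : Y) : g.conj e t = e (g (e.symm t)) := rfl

theorem coe_conj_trans (g f : X ≃ᵢ X) (e : X ≃ₜ Y) :
    ⇑((g.trans f).conj e) = f.conj e ∘ g.conj e := by
  ext; simp

theorem semiconj_conj (g : X ≃ᵢ X) (e : X ≃ₜ Y) : Semiconj e.symm (g.conj e) g :=
  fun t => by simp

theorem strictMono_or_strictAnti_conj [ConditionallyCompleteLinearOrder Y] [OrderTopology Y]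
    [DenselyOrdered Y] (g : X ≃ᵢ X) (e : X ≃ₜ Y) : StrictMono (g.conj e) ∨ StrictAnti (g.conj e) :=
  (g.conj e).continuous.strictMono_of_inj (g.conj e).injective

theorem conj_trans_neg_apply (g : X ≃ᵢ X) (e : X ≃ₜ ℝ) (t : ℝ) :
    g.conj (e.trans (Homeomorph.neg ℝ)) t = -g.conj e (-t) := rfl

section Order

variable [LinearOrder Y] {g : X ≃ᵢ X} {e : X ≃ₜ Y}

theorem strictMono_conj_symm (hg : StrictMono (g.conj e)) :
    StrictMono (g.symm.conj e) :=
  fun a b hab => hg.lt_iff_lt.1 (by simpa using hab)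

theorem strictAnti_conj_symm (hg : StrictAnti (g.conj e)) :
    StrictAnti (g.symm.conj e) :=
  fun a b hab => hg.lt_iff_gt.1 (by simpa using hab)

end Order

variable {g : X ≃ᵢ X} {e : X ≃ₜ ℝ}

theorem strictMono_conj_trans_neg (hg : StrictMono (g.conj e)) :
    StrictMono (g.conj (e.trans (Homeomorph.neg ℝ))) :=
  fun a b hab => by simpa only [conj_trans_neg_apply, neg_lt_neg_iff] using hg (neg_lt_neg hab)

theorem conj_le_self_of_le (hg : StrictMono (g.conj e)) {a t : ℝ} (ha : g.conj e a = a)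
    (hta : t ≤ a) : g.conj e t ≤ t := by
  by_contra! ht
  obtain ⟨L, hL, hlim⟩ := hg.monotone.exists_tendsto_iterate_of_le_map ha hta ht.le
  have horbit : Tendsto (fun n => g^[n] (e.symm t)) atTop (𝓝 (e.symm L)) := by
    simpa only [comp_def, ((semiconj_conj g e).iterate_right _).eq] using
      (e.symm.continuous.tendsto L).comp hlim
  obtain rfl := e.symm.injective (g.isometry.eq_of_tendsto_iterate horbit)
  exact hL.not_gt ht

theorem conj_le_self (hg : StrictMono (g.conj e)) {p : X} (hp : g p = p) (t : ℝ) :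
    g.conj e t ≤ t := by
  rcases le_total t (e p) with ht | ht
  · exact conj_le_self_of_le hg (by simp [hp]) ht
  · have hsymm : g.symm p = p := g.symm_apply_eq.2 hp.symm
    have := conj_le_self_of_le (strictMono_conj_trans_neg (strictMono_conj_symm hg))
      (a := -e p) (by simp [hsymm]) (neg_le_neg ht)
    calc g.conj e t ≤ g.conj e (g.symm.conj e t) := hg.monotone (by simpa using this)
      _ = t := by simp

theorem eq_refl_of_strictMono_conj (hg : StrictMono (g.conj e)) {p : X} (hp : g p = p) :
    g = IsometryEquiv.refl X := by
  ext x
  show g x = x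
  refine e.injective (le_antisymm (by simpa using conj_le_self hg hp (e x)) ?_)
  simpa using conj_le_self (strictMono_conj_symm hg) (g.symm_apply_eq.2 hp.symm) (e (g x))

theorem eq_of_strictMono_conj {g h : X ≃ᵢ X} (hg : StrictMono (g.conj e))
    (hh : StrictMono (h.conj e)) {p : X} (hp : g p = h p) : g = h := by
  have hmono : StrictMono ((h.trans g.symm).conj e) := by
    rw [coe_conj_trans]
    exact (strictMono_conj_symm hg).comp hh
  have hrefl := eq_refl_of_strictMono_conj hmono (p := p) (by simp [← hp])
  ext x
  exact (g.symm_apply_eq.1 (DFunLike.congr_fun hrefl x)).symm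

theorem exists_strictAnti_conj_apply_eq_self (htrans : ∀ x y : X, ∃ f : X ≃ᵢ X, f x = y)
    {f : X ≃ᵢ X} (hf : StrictAnti (f.conj e)) (p : X) :
    ∃ k : X ≃ᵢ X, StrictAnti (k.conj e) ∧ k p = p := by
  obtain ⟨z, hz⟩ := hf.antitone.exists_isFixedPt (f.conj e).continuous
  have hfz : f (e.symm z) = e.symm z := by simpa using congrArg e.symm hz
  obtain ⟨j, hj⟩ := htrans (e.symm z) p
  refine ⟨(j.symm.trans f).trans j, ?_, by simp [← hj, hfz]⟩
  rw [coe_conj_trans, coe_conj_trans]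
  rcases strictMono_or_strictAnti_conj j e with hj | hj
  · exact hj.comp_strictAnti (hf.comp_strictMono (strictMono_conj_symm hj))
  · exact hj.comp_strictMono (hf.comp (strictAnti_conj_symm hj))

theorem exists_strictMono_conj_apply_eq (htrans : ∀ x y : X, ∃ f : X ≃ᵢ X, f x = y) (p q : X) :
    ∃ g : X ≃ᵢ X, StrictMono (g.conj e) ∧ g p = q := by
  obtain ⟨f, hf⟩ := htrans p q
  rcases strictMono_or_strictAnti_conj f e with hmono | hanti
  · exact ⟨f, hmono, hf⟩
  obtain ⟨k, hk, hkp⟩ := exists_strictAnti_conj_apply_eq_self htrans hanti p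
  refine ⟨k.trans f, ?_, by simp [hkp, hf]⟩
  rw [coe_conj_trans]
  exact hanti.comp hk

end IsometryEquiv

/-- Let `(X,d)` be a metric space homeomorphic to `ℝ` whose isometry group acts
transitively. Then for any `p, q ∈ X` there is a unique orientation-preserving isometry
`g` of `X` with `g p = q` (orientation-preserving: increasing when read through the
homeomorphism with `ℝ`). -/
theorem exists_unique_orientation_preserving_isometry
    {X : Type*} [MetricSpace X] (e : X ≃ₜ ℝ)
    (htrans : ∀ x y : X, ∃ f : X ≃ᵢ X, f x = y) :
    ∀ p q : X, ∃! g : X ≃ᵢ X,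
      StrictMono (fun t : ℝ => e (g (e.symm t))) ∧ g p = q := by
  intro p q
  obtain ⟨g, hg, hgp⟩ := IsometryEquiv.exists_strictMono_conj_apply_eq (e := e) htrans p q
  exact ⟨g, ⟨hg, hgp⟩, fun h ⟨hh, hhp⟩ =>
    IsometryEquiv.eq_of_strictMono_conj hh hg (p := p) (hhp.trans hgp.symm)⟩
end

section
/- Let (X,d) be a metric space homeomorphic to ℝ whose isometry group acts transitively. Then there exists a function h : ℝ → ℝ such that (X,d) is isometric to (ℝ, d_h) where d_h(s,t) := h(|s−t|); equivalently, every isometrically homogeneous metric on the line is, up to isometry, a translation-invariant metric on ℝ. -/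
/-!
Transport the metric to `ℝ` along `e`. An increasing isometry `σ` fixing a point `p` is the
identity: for each `x`, the orbit of `x` under `σ` or under `σ⁻¹` is monotone and trapped
between `x` and `p`, so it converges, and an isometry can only have a convergent orbit at a
fixed point. Every isometry of the line is monotone or antitone, and an antitone one has a fixed
point, so the increasing isometries still act transitively, hence simply transitively.

A group `G` of increasing bijections of `ℝ` acting simply transitively is conjugate to the
translations. Let `T a ∈ G` take `0` to `a`. Since `T a u` is increasing and surjective in each
variable, `a ↦ T a a` is a continuous increasing bijection, so `G` has square roots. Iterated
square roots `r n` of `T 1` make `k / 2 ^ n ↦ (r n ^ k) 0` an increasing additive map from the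
dyadic rationals onto a dense set; its monotone extension `ψ` satisfies
`ψ (s + t) = T (ψ s) (ψ t)`. Pulled back by `ψ`, the distance is therefore invariant under
translations, and being symmetric it depends only on `|s - t|`.
-/

open Filter Function Set Topology Equiv

section IterateOrder

variable {α : Type*} [ConditionallyCompleteLinearOrder α] [TopologicalSpace α] [OrderTopology α]
  {f : α → α}

theorem Monotone.exists_tendsto_iterate_of_map_mem_uIcc (hf : Monotone f) {p x : α}
    (hp : IsFixedPt f p) (hx : f x ∈ uIcc p x) :
    ∃ y, Tendsto (fun n => f^[n] x) atTop (𝓝 y) := by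
  rcases le_total p x with hpx | hxp
  · rw [uIcc_of_le hpx] at hx
    refine ⟨_, tendsto_atTop_ciInf (hf.antitone_iterate_of_map_le hx.2) ⟨p, ?_⟩⟩
    rintro _ ⟨n, rfl⟩
    simpa [(hp.iterate n).eq] using hf.iterate n hpx
  · rw [uIcc_of_ge hxp] at hx
    refine ⟨_, tendsto_atTop_ciSup (hf.monotone_iterate_of_le_map hx.1) ⟨p, ?_⟩⟩
    rintro _ ⟨n, rfl⟩
    simpa [(hp.iterate n).eq] using hf.iterate n hxp

theorem Monotone.tendsto_iterate_atTop (hf : Monotone f) (hc : Continuous f)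
    (h : ∀ x, x < f x) (x : α) : Tendsto (fun n => f^[n] x) atTop atTop := by
  refine (tendsto_atTop_of_monotone (hf.monotone_iterate_of_le_map (h x).le)).resolve_right ?_
  rintro ⟨y, hy⟩
  exact (h y).ne (isFixedPt_of_tendsto_iterate hy hc.continuousAt).symm

end IterateOrder

section Connected

variable {α : Type*} [LinearOrder α] [TopologicalSpace α] [OrderClosedTopology α]
  [PreconnectedSpace α] {f : α → α}

theorem Continuous.map_lt_self_of_map_lt_self (hf : Continuous f) (hfix : ∀ x, f x ≠ x) {p : α}
    (hp : f p < p) (x : α) : f x < x := by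
  have hclopen : IsClopen {x | f x < x} := by
    refine ⟨?_, isOpen_lt hf continuous_id⟩
    convert isClosed_le hf continuous_id using 1
    ext y
    exact (le_iff_lt_or_eq.trans (or_iff_left (hfix y))).symm
  exact eq_univ_iff_forall.1 (hclopen.eq_univ ⟨p, hp⟩) x

theorem Continuous.exists_isFixedPt_of_antitone [Nonempty α] (hf : Continuous f)
    (ha : Antitone f) : ∃ c, IsFixedPt f c := by
  by_contra! hfix
  obtain ⟨p⟩ := ‹Nonempty α›
  rcases Ne.lt_or_gt (hfix p) with hp | hp
  · exact (hf.map_lt_self_of_map_lt_self hfix hp (f p)).not_ge (ha hp.le)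
  · have hle : f p ≤ f (f p) :=
      not_lt.1 fun h => hp.not_gt (hf.map_lt_self_of_map_lt_self hfix h p)
    exact (hle.lt_of_ne (Ne.symm (hfix (f p)))).not_ge (ha hp.le)

end Connected

theorem Isometry.isFixedPt_of_tendsto_iterate {X : Type*} [EMetricSpace X] {f : X → X}
    (hf : Isometry f) {x y : X} (h : Tendsto (fun n => f^[n] x) atTop (𝓝 y)) :
    IsFixedPt f x := by
  have hy : IsFixedPt f y := _root_.isFixedPt_of_tendsto_iterate h hf.continuous.continuousAt
  have hdist : Tendsto (fun n => edist (f^[n] x) y) atTop (𝓝 (edist y y)) :=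
    h.edist tendsto_const_nhds
  have hconst : ∀ n, edist (f^[n] x) y = edist x y := by
    intro n
    induction n with
    | zero => rfl
    | succ n ih => rw [iterate_succ_apply', ← ih, ← hf.edist_eq (f^[n] x) y, hy.eq]
  simp only [hconst, edist_self, tendsto_const_nhds_iff, edist_eq_zero] at hdist
  rw [hdist]
  exact hy

theorem continuous_diag_of_strictMono_of_surjective {α β : Type*} [LinearOrder α]
    [TopologicalSpace α] [OrderTopology α] [LinearOrder β] [DenselyOrdered β]
    [TopologicalSpace β] [OrderTopology β] {f : α → α → β}
    (hmono₁ : ∀ y, StrictMono (f · y)) (hmono₂ : ∀ x, StrictMono (f x))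
    (hsurj₁ : ∀ y, Surjective (f · y)) (hsurj₂ : ∀ x, Surjective (f x)) :
    Continuous fun x => f x x := by
  have hdiag : StrictMono fun x => f x x := fun a b h => (hmono₂ a h).trans (hmono₁ b h)
  have hle {a b c d : α} (hac : a ≤ c) (hbd : b ≤ d) : f a b ≤ f c d :=
    ((hmono₂ a).monotone hbd).trans ((hmono₁ d).monotone hac)
  refine continuous_iff_continuousAt.2 fun a =>
    (hdiag.strictMonoOn univ).continuousAt_of_exists_between univ_mem ?_ ?_
  · intro b hb
    obtain ⟨m, hbm, hma⟩ := exists_between hb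
    obtain ⟨u, rfl⟩ := hsurj₂ a m
    obtain ⟨a', rfl⟩ := hsurj₁ u b
    refine ⟨max a' u, mem_univ _, hle (le_max_left _ _) (le_max_right _ _),
      hdiag (max_lt ?_ ?_)⟩
    · exact (hmono₁ u).lt_iff_lt.1 hbm
    · exact (hmono₂ a).lt_iff_lt.1 hma
  · intro b hb
    obtain ⟨m, hma, hbm⟩ := exists_between hb
    obtain ⟨u, rfl⟩ := hsurj₂ a m
    obtain ⟨a', rfl⟩ := hsurj₁ u b
    refine ⟨min a' u, mem_univ _, hdiag (lt_min ?_ ?_),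
      hle (min_le_left _ _) (min_le_right _ _)⟩
    · exact (hmono₁ u).lt_iff_lt.1 hbm
    · exact (hmono₂ a).lt_iff_lt.1 hma

theorem exists_dyadic_btwn {K : Type*} [Field K] [LinearOrder K] [IsStrictOrderedRing K]
    [FloorRing K] {s t : K} (h : s < t) :
    ∃ (n : ℕ) (k : ℤ), s < k / 2 ^ n ∧ k / 2 ^ n < t := by
  obtain ⟨n, hn⟩ := pow_unbounded_of_one_lt (t - s)⁻¹ (one_lt_two : (1 : K) < 2)
  have h2n : (0 : K) < 2 ^ n := by positivity
  have hgap : 1 < t * 2 ^ n - s * 2 ^ n := by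
    rw [← sub_mul, ← inv_mul_lt_iff₀ (sub_pos.2 h), mul_one]
    exact hn
  refine ⟨n, ⌊s * 2 ^ n⌋ + 1, ?_, ?_⟩
  · rw [lt_div_iff₀ h2n]
    exact_mod_cast Int.lt_floor_add_one (s * 2 ^ n)
  · rw [div_lt_iff₀ h2n]
    push_cast
    linarith [Int.floor_le (s * 2 ^ n)]

theorem dense_dyadic : Dense {x : ℝ | ∃ (n : ℕ) (k : ℤ), (k : ℝ) / 2 ^ n = x} :=
  dense_iff_exists_between.2 fun _ _ h =>
    let ⟨n, k, hs, ht⟩ := exists_dyadic_btwn h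
    ⟨_, ⟨n, k, rfl⟩, hs, ht⟩

namespace Equiv.Perm

variable {α : Type*}

theorem strictMono_inv [LinearOrder α] {g : Perm α} (hg : StrictMono g) : StrictMono ⇑g⁻¹ :=
  fun a b hab => hg.lt_iff_lt.1 (by simpa using hab)

theorem strictMono_zpow_apply [Preorder α] {g : Perm α} (hg : ∀ x, x < g x) (x : α) :
    StrictMono fun k : ℤ => (g ^ k) x :=
  strictMono_int_of_lt_succ fun k => by
    rw [add_comm, zpow_one_add, mul_apply]
    exact hg _

theorem exists_zpow_apply_mem_Ioc [ConditionallyCompleteLinearOrder α] [TopologicalSpace α]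
    [OrderTopology α] [DenselyOrdered α] {g : Perm α} (hg : StrictMono g) (hpos : ∀ x, x < g x)
    (x u : α) : ∃ k : ℤ, (g ^ k) x ∈ Ioc u (g u) := by
  have htop := hg.monotone.tendsto_iterate_atTop
    (hg.monotone.continuous_of_surjective g.surjective) hpos
  obtain ⟨n, hn⟩ := (tendsto_atTop.1 (htop x) (g u)).exists
  obtain ⟨m, hm⟩ := (tendsto_atTop.1 (htop u) (g x)).exists
  replace hn := (hpos u).trans_le hn
  replace hm := (hpos x).trans_le hm
  have hbdd : ∀ k : ℤ, u < (g ^ k) x → -(m : ℤ) ≤ k := by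
    intro k hk
    by_contra! hlt
    have hback : (g ^ (-(m : ℤ))) x < u :=
      (hg.iterate m).lt_iff_lt.1 (by simpa [iterate_eq_pow] using hm)
    exact (hk.trans ((strictMono_zpow_apply hpos x hlt).trans hback)).false
  obtain ⟨k, hk, hmin⟩ :=
    Int.exists_least_of_bdd ⟨_, hbdd⟩ ⟨n, by simpa [iterate_eq_pow] using hn⟩
  refine ⟨k, hk, ?_⟩
  have hprev : (g ^ (k - 1)) x ≤ u := not_lt.1 fun h => by linarith [hmin _ h]
  calc (g ^ k) x = g ((g ^ (k - 1)) x) := by rw [← mul_apply, ← zpow_one_add, add_sub_cancel]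
    _ ≤ g u := hg.monotone hprev

end Equiv.Perm

structure IsSimplyTransitiveIncreasing (G : Subgroup (Perm ℝ)) : Prop where
  strictMono : ∀ g ∈ G, StrictMono g
  eq_one_of_apply_eq : ∀ g ∈ G, ∀ x, g x = x → g = 1
  exists_apply_zero_eq : ∀ a, ∃ g ∈ G, g 0 = a

namespace IsSimplyTransitiveIncreasing

variable {G : Subgroup (Perm ℝ)} (hG : IsSimplyTransitiveIncreasing G)
include hG

theorem continuous {g : Perm ℝ} (hg : g ∈ G) : Continuous g :=
  (hG.strictMono g hg).monotone.continuous_of_surjective g.surjective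

theorem eq_of_apply_eq {g h : Perm ℝ} (hg : g ∈ G) (hh : h ∈ G) {p : ℝ} (hp : g p = h p) :
    g = h := by
  have := hG.eq_one_of_apply_eq _ (G.mul_mem (G.inv_mem hh) hg) p (by simp [hp])
  rwa [inv_mul_eq_one, eq_comm] at this

theorem apply_lt_of_apply_lt {g h : Perm ℝ} (hg : g ∈ G) (hh : h ∈ G) {p : ℝ}
    (hp : g p < h p) (x : ℝ) : g x < h x := by
  have hk : h⁻¹ * g ∈ G := G.mul_mem (G.inv_mem hh) hg
  have hfix : ∀ y, (h⁻¹ * g) y ≠ y := fun y hy =>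
    hp.ne (by rw [hG.eq_of_apply_eq hg hh (p := y) (by simpa using congrArg h hy)])
  have hkp : (h⁻¹ * g) p < p := by
    simpa using (hG.strictMono _ (G.inv_mem hh)) hp
  simpa using (hG.strictMono h hh) ((hG.continuous hk).map_lt_self_of_map_lt_self hfix hkp x)

noncomputable def translate (a : ℝ) : Perm ℝ := (hG.exists_apply_zero_eq a).choose

theorem translate_mem (a : ℝ) : hG.translate a ∈ G := (hG.exists_apply_zero_eq a).choose_spec.1

theorem translate_apply_zero (a : ℝ) : hG.translate a 0 = a :=
  (hG.exists_apply_zero_eq a).choose_spec.2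

theorem translate_eq {g : Perm ℝ} (hg : g ∈ G) : hG.translate (g 0) = g :=
  hG.eq_of_apply_eq (hG.translate_mem _) hg (hG.translate_apply_zero _)

theorem translate_translate (a b : ℝ) :
    hG.translate (hG.translate a b) = hG.translate a * hG.translate b := by
  simpa [translate_apply_zero] using
    hG.translate_eq (G.mul_mem (hG.translate_mem a) (hG.translate_mem b))

theorem translate_zero : hG.translate 0 = 1 := hG.translate_eq G.one_mem

theorem strictMono_translate_apply (u : ℝ) : StrictMono (hG.translate · u) := fun a b hab =>
  hG.apply_lt_of_apply_lt (hG.translate_mem a) (hG.translate_mem b)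
    (p := 0) (by simpa [translate_apply_zero] using hab) u

theorem surjective_translate_apply (u : ℝ) : Surjective (hG.translate · u) := by
  intro b
  have hg : hG.translate b * (hG.translate u)⁻¹ ∈ G :=
    G.mul_mem (hG.translate_mem b) (G.inv_mem (hG.translate_mem u))
  refine ⟨(hG.translate b * (hG.translate u)⁻¹) 0, ?_⟩
  simp only
  rw [hG.translate_eq hg, Perm.mul_apply, Perm.inv_eq_iff_eq.2 (hG.translate_apply_zero u).symm,
    translate_apply_zero]

theorem continuous_translate_apply (u : ℝ) : Continuous (hG.translate · u) :=
  (hG.strictMono_translate_apply u).monotone.continuous_of_surjective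
    (hG.surjective_translate_apply u)

noncomputable def square (a : ℝ) : ℝ := hG.translate a a

theorem translate_square (a : ℝ) : hG.translate (hG.square a) = hG.translate a ^ 2 := by
  rw [square, translate_translate, sq]

theorem square_zero : hG.square 0 = 0 := hG.translate_apply_zero 0

theorem strictMono_square : StrictMono hG.square := fun a b hab =>
  (hG.strictMono _ (hG.translate_mem a) hab).trans (hG.strictMono_translate_apply b hab)

theorem continuous_square : Continuous hG.square :=
  continuous_diag_of_strictMono_of_surjective (f := fun a b => hG.translate a b)
    hG.strictMono_translate_apply
    (fun a => hG.strictMono _ (hG.translate_mem a)) hG.surjective_translate_apply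
    (fun a => (hG.translate a).surjective)

theorem lt_square {a : ℝ} (ha : 0 < a) : a < hG.square a := by
  simpa [square, translate_zero] using hG.strictMono_translate_apply a ha

theorem square_lt {a : ℝ} (ha : a < 0) : hG.square a < a := by
  simpa [square, translate_zero] using hG.strictMono_translate_apply a ha

theorem surjective_square : Surjective hG.square :=
  hG.continuous_square.surjective
    (tendsto_atTop_mono' _ ((eventually_gt_atTop 0).mono fun _ h => (hG.lt_square h).le) tendsto_id)
    (tendsto_atBot_mono' _ ((eventually_lt_atBot 0).mono fun _ h => (hG.square_lt h).le) tendsto_id)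

noncomputable def squareIso : ℝ ≃o ℝ :=
  StrictMono.orderIsoOfSurjective _ hG.strictMono_square hG.surjective_square

theorem squareIso_apply (a : ℝ) : hG.squareIso a = hG.square a := rfl

noncomputable def root (n : ℕ) : ℝ := hG.squareIso.symm^[n] 1

theorem square_root_succ (n : ℕ) : hG.square (hG.root (n + 1)) = hG.root n := by
  rw [root, iterate_succ_apply', ← squareIso_apply, OrderIso.apply_symm_apply, root]

theorem root_pos (n : ℕ) : 0 < hG.root n := by
  induction n with
  | zero => exact one_pos
  | succ n ih =>
    rw [← hG.squareIso.lt_iff_lt, squareIso_apply, squareIso_apply, square_zero,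
      square_root_succ]
    exact ih

theorem tendsto_root : Tendsto hG.root atTop (𝓝 0) := by
  have hfix0 : IsFixedPt hG.squareIso.symm 0 := by
    rw [IsFixedPt, OrderIso.symm_apply_eq, squareIso_apply, square_zero]
  have hmem : hG.squareIso.symm 1 ∈ uIcc 0 1 := by
    rw [uIcc_of_le zero_le_one]
    refine ⟨(hG.root_pos 1).le, ?_⟩
    calc hG.root 1 ≤ hG.square (hG.root 1) := (hG.lt_square (hG.root_pos 1)).le
      _ = 1 := hG.square_root_succ 0
  obtain ⟨L, hL⟩ := hG.squareIso.symm.monotone.exists_tendsto_iterate_of_map_mem_uIcc hfix0 hmem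
  have hLfix : hG.square L = L := by
    have := isFixedPt_of_tendsto_iterate hL hG.squareIso.symm.continuous.continuousAt
    rwa [IsFixedPt, OrderIso.symm_apply_eq, squareIso_apply, eq_comm] at this
  have hL0 : L = 0 := by
    rcases lt_trichotomy L 0 with h | h | h
    · exact absurd hLfix (hG.square_lt h).ne
    · exact h
    · exact absurd hLfix (hG.lt_square h).ne'
  exact hL0 ▸ hL

noncomputable def dyadicStep (n : ℕ) : Perm ℝ := hG.translate (hG.root n)

theorem dyadicStep_mem (n : ℕ) : hG.dyadicStep n ∈ G := hG.translate_mem _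

theorem lt_dyadicStep_apply (n : ℕ) (x : ℝ) : x < hG.dyadicStep n x := by
  simpa [dyadicStep, translate_zero] using hG.strictMono_translate_apply x (hG.root_pos n)

theorem dyadicStep_eq_pow (n j : ℕ) : hG.dyadicStep n = hG.dyadicStep (n + j) ^ 2 ^ j := by
  induction j with
  | zero => simp
  | succ j ih =>
    rw [ih, pow_succ', pow_mul, dyadicStep, dyadicStep, ← translate_square, ← add_assoc,
      square_root_succ]

noncomputable def dyadicPoint (n : ℕ) (k : ℤ) : ℝ := (hG.dyadicStep n ^ k) 0

theorem dyadicPoint_add_level (n j : ℕ) (k : ℤ) :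
    hG.dyadicPoint n k = hG.dyadicPoint (n + j) (2 ^ j * k) := by
  rw [dyadicPoint, dyadicPoint, hG.dyadicStep_eq_pow n j, ← zpow_natCast, ← zpow_mul]
  push_cast
  rfl

theorem translate_dyadicPoint (n : ℕ) (k : ℤ) :
    hG.translate (hG.dyadicPoint n k) = hG.dyadicStep n ^ k :=
  hG.translate_eq (G.zpow_mem (hG.dyadicStep_mem n) k)

theorem translate_dyadicPoint_apply (n : ℕ) (k l : ℤ) :
    hG.translate (hG.dyadicPoint n k) (hG.dyadicPoint n l) = hG.dyadicPoint n (k + l) := by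
  rw [translate_dyadicPoint, dyadicPoint, dyadicPoint, zpow_add, Perm.mul_apply]

theorem dyadicPoint_le_iff {n m : ℕ} {k l : ℤ} :
    hG.dyadicPoint n k ≤ hG.dyadicPoint m l ↔ (k : ℝ) / 2 ^ n ≤ l / 2 ^ m := by
  rw [hG.dyadicPoint_add_level n m, hG.dyadicPoint_add_level m n, add_comm m n, dyadicPoint,
    dyadicPoint,
    (Perm.strictMono_zpow_apply (hG.lt_dyadicStep_apply _) 0).le_iff_le,
    div_le_div_iff₀ (by positivity) (by positivity), ← Int.cast_le (R := ℝ)]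
  push_cast
  rw [mul_comm (2 ^ m : ℝ), mul_comm (2 ^ n : ℝ)]

theorem dyadicPoint_lt_iff {n m : ℕ} {k l : ℤ} :
    hG.dyadicPoint n k < hG.dyadicPoint m l ↔ (k : ℝ) / 2 ^ n < l / 2 ^ m := by
  rw [← not_le, hG.dyadicPoint_le_iff, not_le]

theorem dense_dyadicPoint : Dense {y | ∃ n k, hG.dyadicPoint n k = y} := by
  refine dense_iff_exists_between.2 fun u v huv => ?_
  have hsmall : Tendsto (fun n => hG.translate (hG.root n) u) atTop (𝓝 u) := by
    simpa [comp_def, translate_zero] using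
      ((hG.continuous_translate_apply u).tendsto 0).comp hG.tendsto_root
  obtain ⟨n, hn⟩ := (hsmall.eventually_lt_const huv).exists
  obtain ⟨k, hku, hkv⟩ := Perm.exists_zpow_apply_mem_Ioc (hG.strictMono _ (hG.dyadicStep_mem n))
    (hG.lt_dyadicStep_apply n) 0 u
  exact ⟨_, ⟨n, k, rfl⟩, hku, hkv.trans_lt hn⟩

def dyadicPointsBelow (t : ℝ) : Set ℝ :=
  {y | ∃ (n : ℕ) (k : ℤ), (k : ℝ) / 2 ^ n ≤ t ∧ hG.dyadicPoint n k = y}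

theorem nonempty_dyadicPointsBelow (t : ℝ) : (hG.dyadicPointsBelow t).Nonempty :=
  ⟨_, 0, ⌊t⌋, by simpa using Int.floor_le t, rfl⟩

theorem bddAbove_dyadicPointsBelow (t : ℝ) : BddAbove (hG.dyadicPointsBelow t) := by
  refine ⟨hG.dyadicPoint 0 ⌈t⌉, ?_⟩
  rintro _ ⟨n, k, hk, rfl⟩
  exact hG.dyadicPoint_le_iff.2 (hk.trans (by simpa using Int.le_ceil t))

noncomputable def flow (t : ℝ) : ℝ := sSup (hG.dyadicPointsBelow t)

theorem flow_dyadic (n : ℕ) (k : ℤ) : hG.flow (k / 2 ^ n) = hG.dyadicPoint n k :=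
  le_antisymm
    (csSup_le (hG.nonempty_dyadicPointsBelow _) fun _ ⟨_, _, hk, hy⟩ =>
      hy ▸ hG.dyadicPoint_le_iff.2 hk)
    (le_csSup (hG.bddAbove_dyadicPointsBelow _) ⟨n, k, le_rfl, rfl⟩)

theorem monotone_flow : Monotone hG.flow := fun _ t hst =>
  csSup_le_csSup (hG.bddAbove_dyadicPointsBelow t) (hG.nonempty_dyadicPointsBelow _)
    fun _ ⟨n, k, hk, hy⟩ => ⟨n, k, hk.trans hst, hy⟩

theorem denseRange_flow : DenseRange hG.flow :=
  hG.dense_dyadicPoint.mono <| by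
    rintro _ ⟨n, k, rfl⟩
    exact ⟨_, hG.flow_dyadic n k⟩

theorem continuous_flow : Continuous hG.flow :=
  hG.monotone_flow.continuous_of_denseRange hG.denseRange_flow

theorem strictMono_flow : StrictMono hG.flow := by
  intro s t hst
  obtain ⟨n, k, hs, hkt⟩ := exists_dyadic_btwn hst
  obtain ⟨m, l, hkl, ht⟩ := exists_dyadic_btwn hkt
  calc hG.flow s ≤ hG.flow (k / 2 ^ n) := hG.monotone_flow hs.le
    _ < hG.flow (l / 2 ^ m) := by
      rw [flow_dyadic, flow_dyadic]
      exact hG.dyadicPoint_lt_iff.2 hkl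
    _ ≤ hG.flow t := hG.monotone_flow ht.le

theorem surjective_flow : Surjective hG.flow := by
  refine hG.continuous_flow.surjective (tendsto_atTop_atTop_of_monotone hG.monotone_flow ?_)
    (tendsto_atBot_atBot_of_monotone hG.monotone_flow ?_)
  · intro b
    obtain ⟨_, ⟨a, rfl⟩, hb⟩ := hG.denseRange_flow.exists_gt b
    exact ⟨a, hb.le⟩
  · intro b
    obtain ⟨_, ⟨a, rfl⟩, hb⟩ := hG.denseRange_flow.exists_lt b
    exact ⟨a, hb.le⟩

theorem flow_add_dyadic (n m : ℕ) (k l : ℤ) :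
    hG.flow (k / 2 ^ n + l / 2 ^ m) =
      hG.translate (hG.flow (k / 2 ^ n)) (hG.flow (l / 2 ^ m)) := by
  have hsum : (k : ℝ) / 2 ^ n + l / 2 ^ m =
      ((2 ^ m * k + 2 ^ n * l : ℤ) : ℝ) / 2 ^ (n + m) := by
    push_cast
    field_simp
    ring
  rw [hsum, flow_dyadic, flow_dyadic, flow_dyadic, hG.dyadicPoint_add_level n m,
    hG.dyadicPoint_add_level m n,
    add_comm m n, translate_dyadicPoint_apply]

theorem flow_dyadic_add (n : ℕ) (k : ℤ) (t : ℝ) :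
    hG.flow (k / 2 ^ n + t) = hG.translate (hG.flow (k / 2 ^ n)) (hG.flow t) := by
  refine congrFun ((hG.continuous_flow.comp (continuous_const_add _)).ext_on dense_dyadic
    ((hG.continuous (hG.translate_mem _)).comp hG.continuous_flow) ?_) t
  rintro _ ⟨m, l, rfl⟩
  exact hG.flow_add_dyadic n m k l

theorem flow_add (s t : ℝ) : hG.flow (s + t) = hG.translate (hG.flow s) (hG.flow t) := by
  refine congrFun ((hG.continuous_flow.comp (continuous_add_const t)).ext_on dense_dyadic
    ((hG.continuous_translate_apply _).comp hG.continuous_flow) ?_) s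
  rintro _ ⟨n, k, rfl⟩
  exact hG.flow_dyadic_add n k t

theorem exists_orderIso_conj_add :
    ∃ ψ : ℝ ≃o ℝ, ∀ s, ∃ g ∈ G, ∀ t, ψ (s + t) = g (ψ t) :=
  ⟨StrictMono.orderIsoOfSurjective _ hG.strictMono_flow hG.surjective_flow,
    fun s => ⟨_, hG.translate_mem (hG.flow s), hG.flow_add s⟩⟩

end IsSimplyTransitiveIncreasing

section IsometryGroup

variable {X : Type*} [MetricSpace X] (e : X ≃ₜ ℝ)

def isometryGroup : Subgroup (Perm ℝ) where
  carrier := {σ | ∀ s t, dist (e.symm (σ s)) (e.symm (σ t)) = dist (e.symm s) (e.symm t)}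
  mul_mem' hσ hτ s t := (hσ _ _).trans (hτ s t)
  one_mem' _ _ := rfl
  inv_mem' {σ} hσ s t := by simpa using (hσ (σ⁻¹ s) (σ⁻¹ t)).symm

def increasingIsometryGroup : Subgroup (Perm ℝ) where
  carrier := {σ | σ ∈ isometryGroup e ∧ StrictMono σ}
  mul_mem' hσ hτ := ⟨mul_mem hσ.1 hτ.1, hσ.2.comp hτ.2⟩
  one_mem' := ⟨one_mem _, strictMono_id⟩
  inv_mem' hσ := ⟨inv_mem hσ.1, Perm.strictMono_inv hσ.2⟩

variable {e}

theorem isometry_conj_of_mem_isometryGroup {σ : Perm ℝ} (hσ : σ ∈ isometryGroup e) :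
    Isometry (e.symm ∘ σ ∘ e) :=
  Isometry.of_dist_eq fun x y => by simpa using hσ (e x) (e y)

theorem continuous_of_mem_isometryGroup {σ : Perm ℝ} (hσ : σ ∈ isometryGroup e) :
    Continuous σ := by
  have := e.continuous.comp
    ((isometry_conj_of_mem_isometryGroup hσ).continuous.comp e.symm.continuous)
  simpa [comp_def] using this

theorem exists_mem_isometryGroup_apply_eq
    (htrans : ∀ x y : X, ∃ f : X ≃ᵢ X, f x = y) (s t : ℝ) :
    ∃ σ ∈ isometryGroup e, σ s = t := by
  obtain ⟨f, hf⟩ := htrans (e.symm s) (e.symm t)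
  exact ⟨e.toEquiv.permCongr f.toEquiv, fun _ _ => by simpa using f.dist_eq _ _, by simp [hf]⟩

theorem increasingIsometry_apply_eq_of_mem_uIcc {σ : Perm ℝ}
    (hσ : σ ∈ increasingIsometryGroup e) {p x : ℝ}
    (hp : σ p = p) (hx : σ x ∈ uIcc p x) : σ x = x := by
  obtain ⟨L, hL⟩ := hσ.2.monotone.exists_tendsto_iterate_of_map_mem_uIcc hp hx
  have hsemiconj : Semiconj e.symm σ (e.symm ∘ σ ∘ e) := fun y => by simp
  have horbit : Tendsto (fun n => (e.symm ∘ σ ∘ e)^[n] (e.symm x)) atTop (𝓝 (e.symm L)) :=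
    ((e.symm.continuous.tendsto L).comp hL).congr fun n => hsemiconj.iterate_right n x
  have hfix := (isometry_conj_of_mem_isometryGroup hσ.1).isFixedPt_of_tendsto_iterate horbit
  simpa [IsFixedPt] using hfix

theorem eq_one_of_mem_increasingIsometryGroup {σ : Perm ℝ}
    (hσ : σ ∈ increasingIsometryGroup e) {p : ℝ} (hp : σ p = p) : σ = 1 := by
  have hσ' := inv_mem hσ
  have hp' : σ⁻¹ p = p := by rw [Perm.inv_eq_iff_eq, hp]
  have hmono := hσ.2.monotone
  have hmono' := hσ'.2.monotone
  ext x
  rcases le_total p x with hpx | hxp <;> rcases le_total (σ x) x with h | h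
  · refine increasingIsometry_apply_eq_of_mem_uIcc hσ hp ?_
    rw [uIcc_of_le hpx]
    exact ⟨hp ▸ hmono hpx, h⟩
  · refine (Perm.inv_eq_iff_eq.1 (increasingIsometry_apply_eq_of_mem_uIcc hσ' hp' ?_)).symm
    rw [uIcc_of_le hpx]
    exact ⟨hp' ▸ hmono' hpx, by simpa using hmono' h⟩
  · refine (Perm.inv_eq_iff_eq.1 (increasingIsometry_apply_eq_of_mem_uIcc hσ' hp' ?_)).symm
    rw [uIcc_of_ge hxp]
    exact ⟨by simpa using hmono' h, hp' ▸ hmono' hxp⟩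
  · refine increasingIsometry_apply_eq_of_mem_uIcc hσ hp ?_
    rw [uIcc_of_ge hxp]
    exact ⟨h, hp ▸ hmono hxp⟩

theorem exists_mem_increasingIsometryGroup_apply_zero_eq
    (htrans : ∀ x y : X, ∃ f : X ≃ᵢ X, f x = y) (a : ℝ) :
    ∃ σ ∈ increasingIsometryGroup e, σ 0 = a := by
  have horient {σ : Perm ℝ} (hσ : σ ∈ isometryGroup e) : StrictMono σ ∨ StrictAnti σ :=
    (continuous_of_mem_isometryGroup hσ).strictMono_of_inj σ.injective
  by_cases hanti : ∃ σ ∈ isometryGroup e, StrictAnti σ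
  · obtain ⟨σ, hσ, hσanti⟩ := hanti
    obtain ⟨c, hc⟩ := (continuous_of_mem_isometryGroup hσ).exists_isFixedPt_of_antitone
      hσanti.antitone
    -- composing with `σ`, which fixes `c`, corrects the orientation
    have hfrom (b : ℝ) : ∃ τ ∈ increasingIsometryGroup e, τ c = b := by
      obtain ⟨τ, hτ, hτc⟩ := exists_mem_isometryGroup_apply_eq htrans c b
      rcases horient hτ with hmono | hτanti
      · exact ⟨τ, ⟨hτ, hmono⟩, hτc⟩
      · exact ⟨τ * σ, ⟨mul_mem hτ hσ, hτanti.comp hσanti⟩, by simp [hc.eq, hτc]⟩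
    obtain ⟨α, hα, hα0⟩ := hfrom 0
    obtain ⟨β, hβ, hβa⟩ := hfrom a
    exact ⟨β * α⁻¹, mul_mem hβ (inv_mem hα), by simp [← hα0, hβa]⟩
  · obtain ⟨σ, hσ, hσa⟩ := exists_mem_isometryGroup_apply_eq htrans 0 a
    exact ⟨σ, ⟨hσ, (horient hσ).resolve_right fun h => hanti ⟨σ, hσ, h⟩⟩, hσa⟩

theorem isSimplyTransitiveIncreasing_increasingIsometryGroup
    (htrans : ∀ x y : X, ∃ f : X ≃ᵢ X, f x = y) :
    IsSimplyTransitiveIncreasing (increasingIsometryGroup e) where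
  strictMono _ hσ := hσ.2
  eq_one_of_apply_eq _ hσ _ := eq_one_of_mem_increasingIsometryGroup hσ
  exists_apply_zero_eq := exists_mem_increasingIsometryGroup_apply_zero_eq htrans

end IsometryGroup

/-- Let `(X,d)` be a metric space homeomorphic to `ℝ` whose isometry group acts
transitively. Then there is `h : ℝ → ℝ` such that `(X,d)` is isometric to `(ℝ, d_h)` with
`d_h(s,t) := h(|s−t|)`: every isometrically homogeneous metric on the line is, up to
isometry, a translation-invariant metric on `ℝ`. -/
theorem isometrically_homogeneous_curve_classification
    {X : Type*} [MetricSpace X] (e : X ≃ₜ ℝ)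
    (htrans : ∀ x y : X, ∃ f : X ≃ᵢ X, f x = y) :
    ∃ (h : ℝ → ℝ) (φ : X ≃ ℝ), ∀ x y : X, dist x y = h |φ x - φ y| := by
  have hG := isSimplyTransitiveIncreasing_increasingIsometryGroup (e := e) htrans
  obtain ⟨ψ, hψ⟩ := hG.exists_orderIso_conj_add
  set h : ℝ → ℝ := fun r => dist (e.symm (ψ r)) (e.symm (ψ 0))
  have hsub (s t : ℝ) : dist (e.symm (ψ s)) (e.symm (ψ t)) = h (s - t) := by
    obtain ⟨g, hg, hgψ⟩ := hψ t
    have := hg.1 (ψ (s - t)) (ψ 0)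
    rw [← hgψ, ← hgψ, add_sub_cancel, add_zero] at this
    exact this
  have habs (s t : ℝ) : dist (e.symm (ψ s)) (e.symm (ψ t)) = h |s - t| := by
    rcases abs_cases (s - t) with ⟨hst, -⟩ | ⟨hst, -⟩
    · rw [hst, hsub]
    · rw [hst, neg_sub, ← hsub, dist_comm]
  refine ⟨h, e.toEquiv.trans ψ.symm.toEquiv, fun x y => ?_⟩
  simpa using habs (ψ.symm (e x)) (ψ.symm (e y))
end

section
/- With D the family of translation-invariant metrics ρ on ℝ satisfying ρ(0,x) ≤ |x|, let δ_n := sup{ρ ∈ D : ρ(1/k) ≤ 1/(k+1) for all k ≤ n} and write δ_n(x) := δ_n(0,x). Then for x ∈ (0, 1/n), δ_n(x) = min{x, 1/(n+1) − x + 1/n}; consequently, if p ∈ (0,1/n) and δ_n(p) ≤ 1/(n+1), then p ≤ 1/(n+1). -/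
/-!
Every `ρ` in the family satisfies `ρ(0,x) ≤ |x|` and, by the triangle inequality through `1/n`,
`ρ(0,x) ≤ ρ(0,1/n) + ρ(1/n,x) ≤ 1/(n+1) + |x - 1/n|`. Conversely, price a point `t` by the
cheapest way to reach it from `0` by a free walk costing its length, allowing at most one jump
`±1/k` (`k ≤ n`) at cost `1/(k+1)`, and cap the price at `2/(n+1)`. Since two jumps always cost
at least the cap, this price is subadditive, so it is the length function of a metric in the
family, and on `(0, 1/n)` it attains the upper bound.
-/

/-- `ρ` is a translation-invariant metric on `ℝ`. -/
def IsTIMetric (ρ : ℝ → ℝ → ℝ) : Prop :=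
  (∀ x y : ℝ, 0 ≤ ρ x y) ∧ (∀ x y : ℝ, ρ x y = 0 ↔ x = y) ∧
  (∀ x y : ℝ, ρ x y = ρ y x) ∧ (∀ x y z : ℝ, ρ x z ≤ ρ x y + ρ y z) ∧
  (∀ x y v : ℝ, ρ (x + v) (y + v) = ρ x y)

/-- The family `D` of translation-invariant metrics on `ℝ` with `ρ(0,x) ≤ |x|`. -/
def DFam : Set (ℝ → ℝ → ℝ) := {ρ | IsTIMetric ρ ∧ ∀ x : ℝ, ρ 0 x ≤ |x|}

/-- `δ_n := sup{ρ ∈ D : ρ(1/k) ≤ 1/(k+1) for all k ≤ n}`. -/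
noncomputable def deltaSup (n : ℕ) (x y : ℝ) : ℝ :=
  sSup ((fun ρ : ℝ → ℝ → ℝ => ρ x y) ''
    {ρ ∈ DFam | ∀ k : ℕ, 0 < k → k ≤ n → ρ 0 (1 / (k : ℝ)) ≤ 1 / ((k : ℝ) + 1)})

section TruncJumpLength

variable {E ι : Type*} [SeminormedAddCommGroup E]

/-- The cheapest cost of reaching `t` from `0` by a walk costing its length together with at most
one jump `± a i` costing `w i`, capped at `C`. -/
noncomputable def truncJumpLength (C : ℝ) (a : ι → E) (w : ι → ℝ) (t : E) : ℝ :=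
  min C (min ‖t‖ (⨅ i, w i + min ‖t - a i‖ ‖t + a i‖))

variable {C : ℝ} {a : ι → E} {w : ι → ℝ}

theorem truncJumpLength_le_const (t : E) : truncJumpLength C a w t ≤ C :=
  min_le_left _ _

theorem truncJumpLength_le_norm (t : E) : truncJumpLength C a w t ≤ ‖t‖ :=
  (min_le_right _ _).trans (min_le_left _ _)

theorem truncJumpLength_le_jump [Finite ι] (i : ι) (t : E) :
    truncJumpLength C a w t ≤ w i + min ‖t - a i‖ ‖t + a i‖ :=
  (min_le_right _ _).trans <| (min_le_right _ _).trans <|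
    ciInf_le (Finite.bddBelow_range _) i

theorem le_truncJumpLength [Nonempty ι] {b : ℝ} {t : E} (hC : b ≤ C) (ht : b ≤ ‖t‖)
    (hw : ∀ i, b ≤ w i + min ‖t - a i‖ ‖t + a i‖) : b ≤ truncJumpLength C a w t :=
  le_min hC (le_min ht (le_ciInf hw))

theorem truncJumpLength_cases [Finite ι] [Nonempty ι] (t : E) :
    truncJumpLength C a w t = C ∨ truncJumpLength C a w t = ‖t‖ ∨
      ∃ i, truncJumpLength C a w t = w i + min ‖t - a i‖ ‖t + a i‖ := by
  obtain ⟨i, hi⟩ := exists_eq_ciInf_of_finite (f := fun i => w i + min ‖t - a i‖ ‖t + a i‖)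
  unfold truncJumpLength
  rw [← hi]
  rcases min_choice C (min ‖t‖ (w i + min ‖t - a i‖ ‖t + a i‖)) with h | h <;> rw [h]
  · exact Or.inl rfl
  · rcases min_choice ‖t‖ (w i + min ‖t - a i‖ ‖t + a i‖) with h' | h' <;> rw [h']
    · exact Or.inr (Or.inl rfl)
    · exact Or.inr (Or.inr ⟨i, rfl⟩)

theorem truncJumpLength_neg (t : E) : truncJumpLength C a w (-t) = truncJumpLength C a w t := by
  have hsub (i : ι) : ‖-t - a i‖ = ‖t + a i‖ := by rw [← neg_add', norm_neg]
  have hadd (i : ι) : ‖-t + a i‖ = ‖t - a i‖ := by rw [neg_add_eq_sub, norm_sub_rev]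
  simp only [truncJumpLength, norm_neg, hsub, hadd, min_comm ‖t + a _‖]

theorem truncJumpLength_nonneg [Nonempty ι] (hC0 : 0 ≤ C) (hC : ∀ i j, C ≤ w i + w j) (t : E) :
    0 ≤ truncJumpLength C a w t :=
  le_truncJumpLength hC0 (norm_nonneg t) fun i =>
    add_nonneg (by linarith [hC i i]) (le_min (norm_nonneg _) (norm_nonneg _))

theorem truncJumpLength_add_le_norm_add [Finite ι] [Nonempty ι] (s t : E) :
    truncJumpLength C a w (s + t) ≤ ‖s‖ + truncJumpLength C a w t := by
  have hst : truncJumpLength C a w (s + t) ≤ C := truncJumpLength_le_const _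
  rcases truncJumpLength_cases (C := C) (a := a) (w := w) t with ht | ht | ⟨i, ht⟩ <;> rw [ht]
  · linarith [norm_nonneg s]
  · exact (truncJumpLength_le_norm _).trans (norm_add_le s t)
  · refine (truncJumpLength_le_jump i _).trans ?_
    have hsub : ‖s + t - a i‖ ≤ ‖s‖ + ‖t - a i‖ := by rw [add_sub_assoc]; exact norm_add_le _ _
    have hadd : ‖s + t + a i‖ ≤ ‖s‖ + ‖t + a i‖ := by rw [add_assoc]; exact norm_add_le _ _
    calc w i + min ‖s + t - a i‖ ‖s + t + a i‖
        ≤ w i + min (‖s‖ + ‖t - a i‖) (‖s‖ + ‖t + a i‖) := by gcongr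
      _ = ‖s‖ + (w i + min ‖t - a i‖ ‖t + a i‖) := by rw [min_add_add_left]; ring

theorem truncJumpLength_add_le [Finite ι] [Nonempty ι] (hC0 : 0 ≤ C)
    (hC : ∀ i j, C ≤ w i + w j) (s t : E) :
    truncJumpLength C a w (s + t) ≤ truncJumpLength C a w s + truncJumpLength C a w t := by
  have hs0 : 0 ≤ truncJumpLength C a w s := truncJumpLength_nonneg hC0 hC s
  have ht0 : 0 ≤ truncJumpLength C a w t := truncJumpLength_nonneg hC0 hC t
  have hst : truncJumpLength C a w (s + t) ≤ C := truncJumpLength_le_const _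
  rcases truncJumpLength_cases (C := C) (a := a) (w := w) s with hs | hs | ⟨i, hs⟩
  · linarith
  · rw [hs]; exact truncJumpLength_add_le_norm_add s t
  rcases truncJumpLength_cases (C := C) (a := a) (w := w) t with ht | ht | ⟨j, ht⟩
  · linarith
  · rw [ht, add_comm s, add_comm _ ‖t‖]; exact truncJumpLength_add_le_norm_add t s
  · have := hC i j
    have := le_min (norm_nonneg (s - a i)) (norm_nonneg (s + a i))
    have := le_min (norm_nonneg (t - a j)) (norm_nonneg (t + a j))
    linarith

end TruncJumpLength

theorem isTIMetric_of_length {L : ℝ → ℝ} (h0 : L 0 = 0) (hpos : ∀ t, t ≠ 0 → 0 < L t)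
    (hneg : ∀ t, L (-t) = L t) (hadd : ∀ s t, L (s + t) ≤ L s + L t) :
    IsTIMetric fun x y => L (y - x) := by
  have hnonneg (t : ℝ) : 0 ≤ L t := by
    rcases eq_or_ne t 0 with rfl | ht
    · exact h0.ge
    · exact (hpos t ht).le
  refine ⟨fun x y => hnonneg _, fun x y => ⟨fun h => ?_, fun h => by simp [h, h0]⟩,
    fun x y => by simp only [← hneg (x - y), neg_sub], fun x y z => ?_, fun x y v => by simp⟩
  · by_contra hxy
    exact (hpos _ (sub_ne_zero.mpr (Ne.symm hxy))).ne' h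
  · simpa using hadd (y - x) (z - y)

theorem le_add_abs_sub_of_mem_DFam {ρ : ℝ → ℝ → ℝ} (hρ : ρ ∈ DFam) (a x : ℝ) :
    ρ 0 x ≤ ρ 0 a + |x - a| := by
  obtain ⟨⟨-, -, -, htri, htransl⟩, hle⟩ := hρ
  have hshift : ρ a x = ρ 0 (x - a) := by simpa using htransl 0 (x - a) a
  linarith [htri 0 a x, hle (x - a)]

def constrainedFam (n : ℕ) : Set (ℝ → ℝ → ℝ) :=
  {ρ ∈ DFam | ∀ k : ℕ, 0 < k → k ≤ n → ρ 0 (1 / (k : ℝ)) ≤ 1 / ((k : ℝ) + 1)}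

theorem le_min_of_mem_constrainedFam {n : ℕ} (hn : 0 < n) {ρ : ℝ → ℝ → ℝ}
    (hρ : ρ ∈ constrainedFam n) {x : ℝ} (hx : x ∈ Set.Ioo (0 : ℝ) (1 / (n : ℝ))) :
    ρ 0 x ≤ min x (1 / ((n : ℝ) + 1) - x + 1 / (n : ℝ)) := by
  obtain ⟨hD, hk⟩ := hρ
  refine le_min (by simpa [abs_of_pos hx.1] using hD.2 x) ?_
  have := le_add_abs_sub_of_mem_DFam hD (1 / (n : ℝ)) x
  rw [abs_of_neg (sub_neg.mpr hx.2)] at this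
  linarith [hk n hn le_rfl]

noncomputable def extremalLength (n : ℕ) : ℝ → ℝ :=
  truncJumpLength (2 / ((n : ℝ) + 1)) (fun k : Set.Icc 1 n => 1 / ((k : ℕ) : ℝ))
    (fun k => 1 / ((k : ℕ) + 1 : ℝ))

section ExtremalLength

variable {n : ℕ}

theorem one_div_succ_le_of_mem_Icc {k : ℕ} (hk : k ∈ Set.Icc 1 n) :
    1 / ((n : ℝ) + 1) ≤ 1 / ((k : ℝ) + 1) := by
  gcongr
  exact_mod_cast hk.2

theorem extremalLength_le_abs (t : ℝ) : extremalLength n t ≤ |t| :=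
  truncJumpLength_le_norm t

theorem extremalLength_one_div_le {k : ℕ} (hk : k ∈ Set.Icc 1 n) :
    extremalLength n (1 / (k : ℝ)) ≤ 1 / ((k : ℝ) + 1) := by
  refine (truncJumpLength_le_jump (⟨k, hk⟩ : Set.Icc 1 n) _).trans ?_
  simp

theorem nonempty_Icc_one (hn : 0 < n) : Nonempty (Set.Icc 1 n) := ⟨⟨n, hn, le_rfl⟩⟩

theorem extremalLength_add_le (hn : 0 < n) (s t : ℝ) :
    extremalLength n (s + t) ≤ extremalLength n s + extremalLength n t := by
  have := nonempty_Icc_one hn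
  refine truncJumpLength_add_le (by positivity) (fun i j => ?_) s t
  have hi := one_div_succ_le_of_mem_Icc i.2
  have hj := one_div_succ_le_of_mem_Icc j.2
  rw [show (2 : ℝ) / (n + 1) = 1 / (n + 1) + 1 / (n + 1) by ring]
  linarith

theorem min_abs_le_extremalLength (hn : 0 < n) (t : ℝ) :
    min |t| (1 / ((n : ℝ) + 1)) ≤ extremalLength n t := by
  have := nonempty_Icc_one hn
  have hcap : 1 / ((n : ℝ) + 1) ≤ 2 / ((n : ℝ) + 1) := by gcongr; norm_num
  refine le_truncJumpLength ((min_le_right _ _).trans hcap) (min_le_left _ _) fun k => ?_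
  have := le_min (abs_nonneg (t - 1 / (k : ℕ))) (abs_nonneg (t + 1 / (k : ℕ)))
  simp only [Real.norm_eq_abs]
  linarith [min_le_right |t| (1 / ((n : ℝ) + 1)), one_div_succ_le_of_mem_Icc k.2]

theorem min_le_extremalLength (hn : 0 < n) {x : ℝ} (hx : x ∈ Set.Ioo (0 : ℝ) (1 / (n : ℝ))) :
    min x (1 / ((n : ℝ) + 1) - x + 1 / (n : ℝ)) ≤ extremalLength n x := by
  have := nonempty_Icc_one hn
  have hn' : (1 : ℝ) ≤ n := by exact_mod_cast hn
  have hx1 := min_le_left x (1 / ((n : ℝ) + 1) - x + 1 / (n : ℝ))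
  have hx2 := min_le_right x (1 / ((n : ℝ) + 1) - x + 1 / (n : ℝ))
  refine le_truncJumpLength ?_ (by rwa [Real.norm_eq_abs, abs_of_pos hx.1]) fun k => ?_
  · -- the cap `2/(n+1)` is at least the mean of `x` and `1/(n+1) - x + 1/n`
    have h3 : 1 / (n : ℝ) ≤ 3 * (1 / ((n : ℝ) + 1)) := by
      rw [mul_one_div, div_le_div_iff₀ (by positivity) (by positivity)]; linarith
    have h2 : 2 / ((n : ℝ) + 1) = 2 * (1 / ((n : ℝ) + 1)) := by ring
    linarith
  · have hk : 1 / (n : ℝ) ≤ 1 / ((k : ℕ) : ℝ) := by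
      gcongr
      · exact_mod_cast k.2.1
      · exact_mod_cast k.2.2
    have hk0 : (0 : ℝ) < 1 / ((k : ℕ) : ℝ) := one_div_pos.mpr (by exact_mod_cast k.2.1)
    have hk1 := one_div_succ_le_of_mem_Icc k.2
    simp only [Real.norm_eq_abs]
    rw [abs_of_neg (by linarith [hx.2]), abs_of_pos (by linarith [hx.1])]
    rcases min_choice (-(x - 1 / ((k : ℕ) : ℝ))) (x + 1 / ((k : ℕ) : ℝ)) with h | h <;> rw [h]
    · linarith
    · linarith [hx.1]

theorem extremalLength_mem_constrainedFam (hn : 0 < n) :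
    (fun x y => extremalLength n (y - x)) ∈ constrainedFam n := by
  have hpos (t : ℝ) (ht : t ≠ 0) : 0 < extremalLength n t :=
    (lt_min (abs_pos.mpr ht) (by positivity)).trans_le (min_abs_le_extremalLength hn t)
  have h0 : extremalLength n 0 = 0 := by
    have hlow := min_abs_le_extremalLength hn 0
    rw [abs_zero, min_eq_left (by positivity)] at hlow
    exact le_antisymm (by simpa using extremalLength_le_abs (n := n) 0) hlow
  refine ⟨⟨isTIMetric_of_length h0 hpos truncJumpLength_neg (extremalLength_add_le hn),
    fun x => by simpa using extremalLength_le_abs x⟩,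
    fun k hk hkn => by simpa using extremalLength_one_div_le ⟨hk, hkn⟩⟩

end ExtremalLength

theorem isGreatest_constrainedFam_apply {n : ℕ} (hn : 0 < n) {x : ℝ}
    (hx : x ∈ Set.Ioo (0 : ℝ) (1 / (n : ℝ))) :
    IsGreatest ((fun ρ : ℝ → ℝ → ℝ => ρ 0 x) '' constrainedFam n)
      (min x (1 / ((n : ℝ) + 1) - x + 1 / (n : ℝ))) := by
  have hmem := extremalLength_mem_constrainedFam hn
  refine ⟨⟨_, hmem, ?_⟩, ?_⟩
  · exact le_antisymm (le_min_of_mem_constrainedFam hn hmem hx)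
      (by simpa using min_le_extremalLength hn hx)
  · rintro _ ⟨ρ, hρ, rfl⟩
    exact le_min_of_mem_constrainedFam hn hρ hx

/-- On `(0, 1/n)` one has `δ_n(x) = min{x, 1/(n+1) − x + 1/n}`; consequently if
`p ∈ (0,1/n)` and `δ_n(p) ≤ 1/(n+1)` then `p ≤ 1/(n+1)`. -/
theorem deltaSup_formula :
    ∀ n : ℕ, 0 < n →
      (∀ x : ℝ, x ∈ Set.Ioo (0 : ℝ) (1 / (n : ℝ)) →
        deltaSup n 0 x = min x (1 / ((n : ℝ) + 1) - x + 1 / (n : ℝ))) ∧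
      (∀ p : ℝ, p ∈ Set.Ioo (0 : ℝ) (1 / (n : ℝ)) →
        deltaSup n 0 p ≤ 1 / ((n : ℝ) + 1) → p ≤ 1 / ((n : ℝ) + 1)) := by
  intro n hn
  have hformula (x : ℝ) (hx : x ∈ Set.Ioo (0 : ℝ) (1 / (n : ℝ))) :
      deltaSup n 0 x = min x (1 / ((n : ℝ) + 1) - x + 1 / (n : ℝ)) :=
    (isGreatest_constrainedFam_apply hn hx).csSup_eq
  refine ⟨hformula, fun p hp hle => ?_⟩
  rw [hformula p hp, min_le_iff] at hle
  rcases hle with hle | hle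
  · exact hle
  · linarith [hp.2]
end

section
/- Let a_n be an increasing sequence with a_n → ∞, a_n/a_{n+1} decreasing, and a_{n+1}/a_n² → ∞. Let D be the family of translation-invariant metrics ρ on ℝ with ρ(0,x) ≤ |x|, and d := sup{ρ ∈ D : ρ(0, a_{n+1}) ≤ a_n for all n}. Then d is a translation-invariant metric on ℝ and (ℝ,d) is not linearly connected: writing q_n := (a_n + a_{n+1})/2, one has d(0, q_n)/a_n → ∞ while d(0,a_n) ≤ a_n and d(0,a_{n+1}) ≤ a_n, so no constant C exists with q_n ∈ B(0, C·a_n) for all n. -/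
/-
To bound `d(0, q_n)` from below it suffices to exhibit one admissible metric that is large at
`q_n`. With `c = a_{n-1}/a_n`, take the translation-invariant metric whose length function is the
inf-convolution of `c|·|` with the additive monoid generated by the steps `±a_{m+1}` of cost `a_m`,
`m ≥ n`. Every combination of steps either costs at least `a_{n+1}` or lands on a multiple
`z a_{n+1}` at cost at least `|z| a_n`, and neither reaches `q_n` more cheaply than `c q_n`.
The constraints for `m < n` hold because `a_m/a_{m+1}` decreases, so
`d(0, q_n)/a_n ≥ a_{n-1} q_n / a_n² ≥ (a_0/2) a_{n+1}/a_n² → ∞`.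
-/
open Filter

/-- `d := sup{ρ ∈ D : ρ(0, a_{n+1}) ≤ a_n for all n}`. -/
noncomputable def dSupSeq (a : ℕ → ℝ) (x y : ℝ) : ℝ :=
  sSup ((fun ρ : ℝ → ℝ → ℝ => ρ x y) ''
    {ρ ∈ DFam | ∀ n : ℕ, ρ 0 (a (n + 1)) ≤ a n})

section Metrics

lemma isTIMetric_of_subadditive {φ : ℝ → ℝ} (hzero : φ 0 = 0) (hpos : ∀ x, x ≠ 0 → 0 < φ x)
    (hneg : ∀ x, φ (-x) = φ x) (hadd : ∀ x y, φ (x + y) ≤ φ x + φ y) :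
    IsTIMetric fun x y => φ (y - x) := by
  have hnonneg : ∀ x, 0 ≤ φ x := fun x => by
    rcases eq_or_ne x 0 with rfl | hx
    exacts [hzero.ge, (hpos x hx).le]
  refine ⟨fun x y => hnonneg _, fun x y => ⟨fun h => ?_, fun h => by simp [h, hzero]⟩,
    fun x y => show φ (y - x) = φ (x - y) by rw [← hneg, neg_sub], fun x y z => ?_,
    fun x y v => by ring_nf⟩
  · by_contra hxy
    exact (hpos _ (sub_ne_zero.2 (Ne.symm hxy))).ne' h
  · simpa using hadd (y - x) (z - y)

lemma le_abs_sub_of_mem_DFam {ρ : ℝ → ℝ → ℝ} (hρ : ρ ∈ DFam) (x y : ℝ) : ρ x y ≤ |x - y| := by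
  obtain ⟨⟨-, -, hsymm, -, htrans⟩, hle⟩ := hρ
  calc ρ x y = ρ 0 (y - x) := by simpa using htrans 0 (y - x) x
    _ ≤ |x - y| := (hle _).trans (abs_sub_comm y x).le

/-- Junk value `0` where `F` is empty. -/
noncomputable def supMetric (F : Set (ℝ → ℝ → ℝ)) (x y : ℝ) : ℝ :=
  sSup ((fun ρ : ℝ → ℝ → ℝ => ρ x y) '' F)

variable {F : Set (ℝ → ℝ → ℝ)}

lemma le_supMetric (hF : F ⊆ DFam) {ρ : ℝ → ℝ → ℝ} (hρ : ρ ∈ F) (x y : ℝ) :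
    ρ x y ≤ supMetric F x y := by
  refine le_csSup ⟨|x - y|, ?_⟩ ⟨ρ, hρ, rfl⟩
  rintro _ ⟨σ, hσ, rfl⟩
  exact le_abs_sub_of_mem_DFam (hF hσ) x y

lemma supMetric_le {x y b : ℝ} (hb : 0 ≤ b) (h : ∀ ρ ∈ F, ρ x y ≤ b) : supMetric F x y ≤ b :=
  Real.sSup_le (Set.forall_mem_image.2 h) hb

lemma isTIMetric_supMetric (hF : F ⊆ DFam) (hne : F.Nonempty) : IsTIMetric (supMetric F) := by
  have hnonneg : ∀ x y, 0 ≤ supMetric F x y := fun x y =>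
    Real.sSup_nonneg (Set.forall_mem_image.2 fun ρ hρ => (hF hρ).1.1 x y)
  refine ⟨hnonneg, fun x y => ⟨fun h => ?_, ?_⟩, fun x y => ?_, fun x y z => ?_, fun x y v => ?_⟩
  · obtain ⟨ρ, hρ⟩ := hne
    exact ((hF hρ).1.2.1 x y).1 (le_antisymm (h ▸ le_supMetric hF hρ x y) ((hF hρ).1.1 x y))
  · rintro rfl
    exact le_antisymm (supMetric_le le_rfl fun ρ hρ => (((hF hρ).1.2.1 x x).2 rfl).le)
      (hnonneg x x)
  · exact congrArg sSup (Set.image_congr fun ρ hρ => (hF hρ).1.2.2.1 x y)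
  · refine supMetric_le (add_nonneg (hnonneg x y) (hnonneg y z)) fun ρ hρ => ?_
    exact ((hF hρ).1.2.2.2.1 x y z).trans
      (add_le_add (le_supMetric hF hρ x y) (le_supMetric hF hρ y z))
  · exact congrArg sSup (Set.image_congr fun ρ hρ => (hF hρ).1.2.2.2.2 x y v)

end Metrics

section InfConvolution

/-- The inf-convolution of `c|·|` with the cost function of a monoid `G` of steps
`(displacement, cost)`. -/
noncomputable def infConv (c : ℝ) (G : AddSubmonoid (ℝ × ℝ)) (x : ℝ) : ℝ :=
  sInf ((fun p : ℝ × ℝ => c * |x - p.1| + p.2) '' (G : Set (ℝ × ℝ)))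

variable {c : ℝ} {G : AddSubmonoid (ℝ × ℝ)}

lemma infConv_le (hc : 0 ≤ c) (hG : ∀ p ∈ G, 0 ≤ p.2) {p : ℝ × ℝ} (hp : p ∈ G) (x : ℝ) :
    infConv c G x ≤ c * |x - p.1| + p.2 := by
  refine csInf_le ⟨0, ?_⟩ ⟨p, hp, rfl⟩
  rintro _ ⟨q, hq, rfl⟩
  have := hG q hq
  positivity

lemma le_infConv {x b : ℝ} (h : ∀ p ∈ G, b ≤ c * |x - p.1| + p.2) : b ≤ infConv c G x :=
  le_csInf ⟨_, 0, G.zero_mem, rfl⟩ (Set.forall_mem_image.2 h)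

lemma infConv_nonneg (hc : 0 ≤ c) (hG : ∀ p ∈ G, 0 ≤ p.2) (x : ℝ) : 0 ≤ infConv c G x :=
  le_infConv fun p hp => by have := hG p hp; positivity

lemma infConv_le_mul_abs (hc : 0 ≤ c) (hG : ∀ p ∈ G, 0 ≤ p.2) (x : ℝ) :
    infConv c G x ≤ c * |x| := by
  simpa using infConv_le hc hG G.zero_mem x

lemma infConv_le_snd (hc : 0 ≤ c) (hG : ∀ p ∈ G, 0 ≤ p.2) {p : ℝ × ℝ} (hp : p ∈ G) :
    infConv c G p.1 ≤ p.2 := by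
  simpa using infConv_le hc hG hp p.1

lemma infConv_neg_le (hc : 0 ≤ c) (hG : ∀ p ∈ G, 0 ≤ p.2)
    (hGneg : ∀ p ∈ G, (-p.1, p.2) ∈ G) (x : ℝ) : infConv c G (-x) ≤ infConv c G x :=
  le_infConv fun p hp => by
    simpa [abs_sub_comm x, neg_add_eq_sub] using infConv_le hc hG (hGneg p hp) (-x)

lemma infConv_neg (hc : 0 ≤ c) (hG : ∀ p ∈ G, 0 ≤ p.2)
    (hGneg : ∀ p ∈ G, (-p.1, p.2) ∈ G) (x : ℝ) : infConv c G (-x) = infConv c G x :=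
  le_antisymm (infConv_neg_le hc hG hGneg x) (by simpa using infConv_neg_le hc hG hGneg (-x))

lemma infConv_add_le (hc : 0 ≤ c) (hG : ∀ p ∈ G, 0 ≤ p.2) (x y : ℝ) :
    infConv c G (x + y) ≤ infConv c G x + infConv c G y := by
  have hsum : ∀ p ∈ G, ∀ q ∈ G,
      infConv c G (x + y) ≤ (c * |x - p.1| + p.2) + (c * |y - q.1| + q.2) := by
    intro p hp q hq
    have htri : |x + y - (p + q).1| ≤ |x - p.1| + |y - q.1| := by
      simpa [add_sub_add_comm] using abs_add_le (x - p.1) (y - q.1)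
    calc infConv c G (x + y) ≤ c * |x + y - (p + q).1| + (p + q).2 :=
          infConv_le hc hG (add_mem hp hq) _
      _ ≤ (c * |x - p.1| + p.2) + (c * |y - q.1| + q.2) := by
          rw [Prod.snd_add]; nlinarith [mul_le_mul_of_nonneg_left htri hc]
  have hx : ∀ p ∈ G, infConv c G (x + y) - (c * |x - p.1| + p.2) ≤ infConv c G y :=
    fun p hp => le_infConv fun q hq => by linarith [hsum p hp q hq]
  have hy : infConv c G (x + y) - infConv c G y ≤ infConv c G x :=
    le_infConv fun p hp => by linarith [hx p hp]
  linarith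

end InfConvolution

section StepMonoid

def stepMonoid (a : ℕ → ℝ) (n : ℕ) : AddSubmonoid (ℝ × ℝ) :=
  AddSubmonoid.closure {p | ∃ m, n ≤ m ∧ (p = (a (m + 1), a m) ∨ p = (-a (m + 1), a m))}

variable {a : ℕ → ℝ} {n : ℕ} {c : ℝ}

lemma neg_fst_mem_stepMonoid {p : ℝ × ℝ} (hp : p ∈ stepMonoid a n) :
    (-p.1, p.2) ∈ stepMonoid a n := by
  induction hp using AddSubmonoid.closure_induction with
  | mem p hp =>
    obtain ⟨m, hm, rfl | rfl⟩ := hp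
    · exact AddSubmonoid.subset_closure ⟨m, hm, Or.inr rfl⟩
    · exact AddSubmonoid.subset_closure ⟨m, hm, Or.inl (by simp)⟩
  | zero => simpa [← Prod.mk_zero_zero] using (stepMonoid a n).zero_mem
  | add p q _ _ hp hq => simpa [add_comm] using add_mem hp hq

lemma stepMonoid_cost (hpos : ∀ m, 0 < a m) (ha : Monotone a) {p : ℝ × ℝ}
    (hp : p ∈ stepMonoid a n) :
    0 ≤ p.2 ∧ (a (n + 1) ≤ p.2 ∨ ∃ z : ℤ, p.1 = z * a (n + 1) ∧ |(z : ℝ)| * a n ≤ p.2) := by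
  induction hp using AddSubmonoid.closure_induction with
  | mem p hp =>
    obtain ⟨m, hm, rfl | rfl⟩ := hp <;> refine ⟨(hpos m).le, ?_⟩ <;>
      rcases hm.eq_or_lt with rfl | hm
    exacts [Or.inr ⟨1, by simp, by simp⟩, Or.inl (ha hm), Or.inr ⟨-1, by simp, by simp⟩,
      Or.inl (ha hm)]
  | zero => exact ⟨le_rfl, Or.inr ⟨0, by simp, by simp⟩⟩
  | add p q _ _ hp hq =>
    obtain ⟨hp0, hp | ⟨z, hpz, hpc⟩⟩ := hp
    · exact ⟨by rw [Prod.snd_add]; linarith [hq.1], Or.inl (by rw [Prod.snd_add]; linarith [hq.1])⟩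
    obtain ⟨hq0, hq | ⟨w, hqw, hqc⟩⟩ := hq
    · exact ⟨by rw [Prod.snd_add]; linarith, Or.inl (by rw [Prod.snd_add]; linarith)⟩
    refine ⟨by rw [Prod.snd_add]; linarith,
      Or.inr ⟨z + w, by rw [Prod.fst_add, hpz, hqw]; push_cast; ring, ?_⟩⟩
    calc |((z + w : ℤ) : ℝ)| * a n ≤ (|(z : ℝ)| + |(w : ℝ)|) * a n := by
          push_cast; gcongr; exacts [(hpos n).le, abs_add_le _ _]
      _ ≤ (p + q).2 := by simp only [Prod.snd_add]; linarith

lemma min_le_infConv_stepMonoid (hpos : ∀ m, 0 < a m) (ha : Monotone a) (hc : 0 ≤ c) (x : ℝ) :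
    min (c * |x|) (a n) ≤ infConv c (stepMonoid a n) x := by
  refine le_infConv fun p hp => ?_
  have hcx : 0 ≤ c * |x - p.1| := by positivity
  obtain ⟨-, hp | ⟨z, hpz, hpc⟩⟩ := stepMonoid_cost hpos ha hp
  · exact (min_le_right _ _).trans (by linarith [ha n.le_succ])
  rcases eq_or_ne z 0 with rfl | hz
  · simp only [Int.cast_zero, zero_mul, abs_zero] at hpz hpc
    rw [hpz, sub_zero]
    exact (min_le_left _ _).trans (by linarith)
  · have : (1 : ℝ) ≤ |(z : ℝ)| := by exact_mod_cast Int.one_le_abs hz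
    exact (min_le_right _ _).trans (by nlinarith [hpos n])

lemma mul_midpoint_le_infConv_stepMonoid (hpos : ∀ m, 0 < a m) (ha : Monotone a) (hc0 : 0 ≤ c)
    (hc1 : c ≤ 1) :
    c * ((a n + a (n + 1)) / 2) ≤ infConv c (stepMonoid a n) ((a n + a (n + 1)) / 2) := by
  set q := (a n + a (n + 1)) / 2 with hq
  have hn := hpos n
  have hle : a n ≤ a (n + 1) := ha n.le_succ
  refine le_infConv fun p hp => ?_
  have hcq : 0 ≤ c * |q - p.1| := by positivity
  obtain ⟨hp0, hp | ⟨z, hpz, hpc⟩⟩ := stepMonoid_cost hpos ha hp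
  · nlinarith
  rcases le_or_gt z 0 with hz | hz
  · have hp1 : p.1 ≤ 0 := by
      rw [hpz]; exact mul_nonpos_of_nonpos_of_nonneg (by exact_mod_cast hz) (hpos _).le
    have : q ≤ |q - p.1| := le_abs.2 (Or.inl (by linarith))
    nlinarith
  · have hz1 : (1 : ℝ) ≤ z := by exact_mod_cast hz
    rw [abs_of_pos (by linarith)] at hpc
    have hp1 : a (n + 1) ≤ p.1 := by rw [hpz]; nlinarith [hpos (n + 1)]
    rw [abs_of_nonpos (by linarith), hpz]
    -- `c (z a_{n+1} - 2q) + z a_n = c (z - 1) a_{n+1} + (z - c) a_n ≥ 0`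
    nlinarith [mul_nonneg (mul_nonneg hc0 (sub_nonneg.2 hz1)) (hpos (n + 1)).le,
      mul_nonneg (sub_nonneg.2 (hc1.trans hz1)) hn.le]

end StepMonoid

section StepMetric

variable {a : ℕ → ℝ} {c : ℝ}

noncomputable def stepMetric (a : ℕ → ℝ) (c : ℝ) (n : ℕ) (x y : ℝ) : ℝ :=
  infConv c (stepMonoid a n) (y - x)

lemma stepMetric_mem (hpos : ∀ m, 0 < a m) (ha : Monotone a) (hc0 : 0 < c) (hc1 : c ≤ 1)
    {n : ℕ} (hc : ∀ m < n, c * a (m + 1) ≤ a m) :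
    stepMetric a c n ∈ {ρ ∈ DFam | ∀ m : ℕ, ρ 0 (a (m + 1)) ≤ a m} := by
  have hG : ∀ p ∈ stepMonoid a n, 0 ≤ p.2 := fun p hp => (stepMonoid_cost hpos ha hp).1
  have hle : ∀ x, infConv c (stepMonoid a n) x ≤ c * |x| := infConv_le_mul_abs hc0.le hG
  have hmetric : IsTIMetric (stepMetric a c n) := by
    refine isTIMetric_of_subadditive (le_antisymm (by simpa using hle 0)
      (infConv_nonneg hc0.le hG 0)) (fun x hx => ?_) (infConv_neg hc0.le hG
      fun p => neg_fst_mem_stepMonoid) (infConv_add_le hc0.le hG)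
    exact (lt_min (by positivity) (hpos n)).trans_le (min_le_infConv_stepMonoid hpos ha hc0.le x)
  refine ⟨⟨hmetric, fun x => ?_⟩, fun m => ?_⟩
  · simpa [stepMetric] using (hle x).trans (mul_le_of_le_one_left (abs_nonneg x) hc1)
  rw [stepMetric, sub_zero]
  rcases lt_or_ge m n with hm | hm
  · exact (hle _).trans (by rw [abs_of_pos (hpos _)]; exact hc m hm)
  · exact infConv_le_snd hc0.le hG (p := (a (m + 1), a m))
      (AddSubmonoid.subset_closure ⟨m, hm, Or.inl rfl⟩)

end StepMetric

section DSupSeq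

variable {a : ℕ → ℝ}

lemma isTIMetric_dSupSeq (hpos : ∀ m, 0 < a m) (ha : Monotone a) : IsTIMetric (dSupSeq a) :=
  isTIMetric_supMetric (fun _ hρ => hρ.1)
    ⟨_, stepMetric_mem (n := 0) hpos ha one_pos le_rfl fun m hm => absurd hm m.not_lt_zero⟩

lemma dSupSeq_zero_le_abs (a : ℕ → ℝ) (x : ℝ) : dSupSeq a 0 x ≤ |x| :=
  supMetric_le (abs_nonneg x) fun _ hρ => hρ.1.2 x

lemma dSupSeq_zero_succ_le (hpos : ∀ m, 0 < a m) (n : ℕ) : dSupSeq a 0 (a (n + 1)) ≤ a n :=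
  supMetric_le (hpos n).le fun _ hρ => hρ.2 n

lemma div_mul_midpoint_le_dSupSeq (hpos : ∀ m, 0 < a m) (ha : Monotone a)
    (hratio : Antitone fun n => a n / a (n + 1)) (n : ℕ) :
    a n / a (n + 1) * ((a (n + 1) + a (n + 2)) / 2) ≤
      dSupSeq a 0 ((a (n + 1) + a (n + 2)) / 2) := by
  set c := a n / a (n + 1)
  have hc0 : 0 < c := div_pos (hpos n) (hpos (n + 1))
  have hc1 : c ≤ 1 := (div_le_one (hpos (n + 1))).2 (ha n.le_succ)
  have hc : ∀ m < n + 1, c * a (m + 1) ≤ a m := fun m hm =>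
    (le_div_iff₀ (hpos (m + 1))).1 (hratio (Nat.lt_succ_iff.1 hm))
  calc c * ((a (n + 1) + a (n + 2)) / 2)
      ≤ infConv c (stepMonoid a (n + 1)) ((a (n + 1) + a (n + 2)) / 2) :=
        mul_midpoint_le_infConv_stepMonoid hpos ha hc0.le hc1
    _ = stepMetric a c (n + 1) 0 ((a (n + 1) + a (n + 2)) / 2) := by rw [stepMetric, sub_zero]
    _ ≤ dSupSeq a 0 ((a (n + 1) + a (n + 2)) / 2) :=
        le_supMetric (fun _ hρ => hρ.1) (stepMetric_mem hpos ha hc0 hc1 hc) _ _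

lemma tendsto_dSupSeq_midpoint_div (hpos : ∀ m, 0 < a m) (ha : Monotone a)
    (hratio : Antitone fun n => a n / a (n + 1))
    (hsq : Tendsto (fun n => a (n + 1) / (a n) ^ 2) atTop atTop) :
    Tendsto (fun n => dSupSeq a 0 ((a n + a (n + 1)) / 2) / a n) atTop atTop := by
  rw [← tendsto_add_atTop_iff_nat 1]
  refine tendsto_atTop_mono (fun n => ?_)
    (((tendsto_add_atTop_iff_nat 1).2 hsq).const_mul_atTop (half_pos (hpos 0)))
  have h1 := hpos (n + 1)
  calc a 0 / 2 * (a (n + 2) / a (n + 1) ^ 2)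
      ≤ a n / a (n + 1) * ((a (n + 1) + a (n + 2)) / 2) / a (n + 1) := by
        have hrhs : a n / a (n + 1) * ((a (n + 1) + a (n + 2)) / 2) / a (n + 1) =
            a n * (a (n + 1) + a (n + 2)) / (2 * a (n + 1) ^ 2) := by
          field_simp
        rw [hrhs, div_mul_div_comm]
        gcongr ?_ / _
        exact mul_le_mul (ha (Nat.zero_le n)) (le_add_of_nonneg_left h1.le) (hpos _).le (hpos n).le
    _ ≤ dSupSeq a 0 ((a (n + 1) + a (n + 2)) / 2) / a (n + 1) := by
        gcongr; exact div_mul_midpoint_le_dSupSeq hpos ha hratio n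

end DSupSeq

theorem dSupSeq_not_linearly_connected_general (a : ℕ → ℝ)
    (hpos : ∀ n, 0 < a n) (hmono : StrictMono a)
    (hratio : ∀ n, a (n + 1) / a (n + 2) ≤ a n / a (n + 1))
    (hsq : Tendsto (fun n => a (n + 1) / (a n) ^ 2) atTop atTop) :
    IsTIMetric (dSupSeq a) ∧
    (∀ n : ℕ, dSupSeq a 0 (a n) ≤ a n ∧ dSupSeq a 0 (a (n + 1)) ≤ a n) ∧
    Tendsto (fun n : ℕ => dSupSeq a 0 ((a n + a (n + 1)) / 2) / a n) atTop atTop ∧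
    ¬ ∃ C : ℝ, ∀ n : ℕ, dSupSeq a 0 ((a n + a (n + 1)) / 2) < C * a n := by
  have htend := tendsto_dSupSeq_midpoint_div hpos hmono.monotone
    (antitone_nat_of_succ_le hratio) hsq
  refine ⟨isTIMetric_dSupSeq hpos hmono.monotone, fun n => ⟨?_, dSupSeq_zero_succ_le hpos n⟩,
    htend, ?_⟩
  · simpa [abs_of_pos (hpos n)] using dSupSeq_zero_le_abs a (a n)
  · rintro ⟨C, hC⟩
    obtain ⟨n, hn⟩ := (htend.eventually_ge_atTop C).exists
    exact (hn.trans_lt ((div_lt_iff₀ (hpos n)).2 (hC n))).false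

/-- For a positive increasing sequence `a_n → ∞` with `a_n/a_{n+1}` decreasing and
`a_{n+1}/a_n² → ∞`, the supremal distance `d` above is a translation-invariant metric on
`ℝ` which is not linearly connected: with `q_n := (a_n + a_{n+1})/2` one has
`d(0,q_n)/a_n → ∞` while `d(0,a_n) ≤ a_n` and `d(0,a_{n+1}) ≤ a_n`, so there is no
constant `C` with `q_n ∈ B(0, C·a_n)` for all `n`. -/
theorem dSupSeq_not_linearly_connected (a : ℕ → ℝ)
    (hpos : ∀ n, 0 < a n) (hmono : StrictMono a)
    (htop : Tendsto a atTop atTop)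
    (hratio : ∀ n, a (n + 1) / a (n + 2) ≤ a n / a (n + 1))
    (hsq : Tendsto (fun n => a (n + 1) / (a n) ^ 2) atTop atTop) :
    IsTIMetric (dSupSeq a) ∧
    (∀ n : ℕ, dSupSeq a 0 (a n) ≤ a n ∧ dSupSeq a 0 (a (n + 1)) ≤ a n) ∧
    Tendsto (fun n : ℕ => dSupSeq a 0 ((a n + a (n + 1)) / 2) / a n) atTop atTop ∧
    ¬ ∃ C : ℝ, ∀ n : ℕ, dSupSeq a 0 ((a n + a (n + 1)) / 2) < C * a n :=
  dSupSeq_not_linearly_connected_general a hpos hmono hratio hsq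
end
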